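/- arXiv:2312.11744 — 6 statements merged into one kernel-verified Lean document; each statement's English description precedes it below -/
import Mathlib

section
/- Let k ≥ 2 be a prime power and let π be a permutation of the finite field F_k. Then there exists a polynomial f ∈ F_k[x,y] of total degree ⌊k/2⌋ such that f(c, π(c)) = 0 for all c ∈ F_k. -/
/-!
Multiply the lines `L_{i,j}` through the pairs of a pairing of the points `(c, π c)`: each line
has total degree one, so over a domain the product has total degree exactly the number of pairs.
This settles even `k`. For odd `k` the graph of `π` has three collinear points: otherwise from each
point the `k - 1` slopes to the other points are distinct and nonzero, hence each `c` has exactly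
one partner at slope `1`, the fibres of `c ↦ π c - c` all have two elements, and `k` is even. One
line through three collinear points and `(k - 3) / 2` pairing lines give degree `(k - 1) / 2`.
-/

open MvPolynomial Finset

section

variable {F : Type*} [Field F]

noncomputable def lPoly (g : F → F) (i j : F) : MvPolynomial (Fin 2) F :=
  C (j - i) * (X 1 - C (g i)) - C (g j - g i) * (X 0 - C i)

theorem eval_lPoly (g : F → F) (i j x y : F) :
    eval ![x, y] (lPoly g i j) = (j - i) * (y - g i) - (g j - g i) * (x - i) := by
  simp [lPoly]

theorem eval_lPoly_left (g : F → F) (i j : F) : eval ![i, g i] (lPoly g i j) = 0 := by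
  simp [eval_lPoly]

theorem eval_lPoly_right (g : F → F) (i j : F) : eval ![j, g j] (lPoly g i j) = 0 := by
  rw [eval_lPoly]; ring

theorem eval_lPoly_eq_zero_of_slope_eq {g : F → F} {i j l : F} (hij : i ≠ j) (hil : i ≠ l)
    (h : (g j - g i) / (j - i) = (g l - g i) / (l - i)) : eval ![l, g l] (lPoly g i j) = 0 := by
  rw [div_eq_div_iff (sub_ne_zero.2 hij.symm) (sub_ne_zero.2 hil.symm)] at h
  rw [eval_lPoly]; linear_combination -h

theorem totalDegree_lPoly (g : F → F) {i j : F} (hij : i ≠ j) : (lPoly g i j).totalDegree = 1 := by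
  refine le_antisymm ?_ (Nat.one_le_iff_ne_zero.2 fun h => ?_)
  · refine (totalDegree_sub _ _).trans (max_le ?_ ?_) <;>
    refine (totalDegree_mul _ _).trans ?_ <;>
    simp only [totalDegree_C, zero_add] <;>
    exact (totalDegree_sub_C_le _ _).trans (totalDegree_X _).le
  · -- a constant polynomial cannot vanish at `(i, g i)` but not at `(i, g i + 1)`
    have h₀ := eval_lPoly_left g i j
    have h₁ := eval_lPoly g i j i (g i + 1)
    rw [totalDegree_eq_zero_iff_eq_C.1 h, eval_C] at h₀ h₁
    rw [h₀] at h₁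
    exact sub_ne_zero.2 hij.symm (by linear_combination -h₁)

theorem lPoly_ne_zero (g : F → F) {i j : F} (hij : i ≠ j) : lPoly g i j ≠ 0 := by
  intro h
  simpa [h] using totalDegree_lPoly g hij

theorem exists_ne_zero_totalDegree_eq_forall_eval_eq_zero (g : F → F) (n : ℕ) (S : Finset F)
    (hS : #S = 2 * n) : ∃ f : MvPolynomial (Fin 2) F,
      f ≠ 0 ∧ f.totalDegree = n ∧ ∀ c ∈ S, eval ![c, g c] f = 0 := by
  classical
  induction n generalizing S with
  | zero =>
    exact ⟨1, one_ne_zero, totalDegree_one, by simp_all⟩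
  | succ n ih =>
    obtain ⟨a, ha, b, hb, hab⟩ := one_lt_card.1 (by omega : 1 < #S)
    have hb' : b ∈ S.erase a := mem_erase.2 ⟨hab.symm, hb⟩
    obtain ⟨f, hf₀, hf, hfS⟩ := ih ((S.erase a).erase b) (by
      rw [card_erase_of_mem hb', card_erase_of_mem ha, hS]; omega)
    refine ⟨lPoly g a b * f, mul_ne_zero (lPoly_ne_zero g hab) hf₀, ?_, fun c hc => ?_⟩
    · rw [totalDegree_mul_of_isDomain (lPoly_ne_zero g hab) hf₀, totalDegree_lPoly g hab, hf,
        add_comm]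
    rw [eval_mul, mul_eq_zero]
    obtain rfl | hca := eq_or_ne c a
    · exact .inl (eval_lPoly_left g c b)
    obtain rfl | hcb := eq_or_ne c b
    · exact .inl (eval_lPoly_right g a c)
    exact .inr (hfS c (mem_erase.2 ⟨hcb, mem_erase.2 ⟨hca, hc⟩⟩))

theorem exists_slope_eq_of_odd_card [Fintype F] (hodd : Odd (Fintype.card F)) {g : F → F}
    (hg : Function.Injective g) :
    ∃ i j l, i ≠ j ∧ i ≠ l ∧ j ≠ l ∧ (g j - g i) / (j - i) = (g l - g i) / (l - i) := by
  classical
  by_contra! hno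
  have hslope_one {i j : F} (hij : i ≠ j) : (g j - g i) / (j - i) = 1 ↔ g j - j = g i - i := by
    rw [div_eq_one_iff_eq (sub_ne_zero.2 hij.symm), sub_eq_sub_iff_sub_eq_sub]
  have hpartner (i : F) : ∃ j ≠ i, g j - j = g i - i := by
    obtain ⟨j, hj, hj1⟩ := surjOn_of_injOn_of_card_le (s := univ.erase i) (t := univ.erase 0)
      (fun j => (g j - g i) / (j - i))
      (fun j hj => mem_erase.2 ⟨div_ne_zero (sub_ne_zero.2 (hg.ne (ne_of_mem_erase hj)))
        (sub_ne_zero.2 (ne_of_mem_erase hj)), mem_univ _⟩)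
      (fun j hj l hl hjl => by_contra fun h => hno i j l (ne_of_mem_erase hj).symm
        (ne_of_mem_erase hl).symm h hjl)
      (by simp) (mem_erase.2 ⟨one_ne_zero, mem_univ 1⟩)
    exact ⟨j, ne_of_mem_erase hj, (hslope_one (ne_of_mem_erase hj).symm).1 hj1⟩
  have hfiber (i : F) : #{c | g c - c = g i - i} = 2 := by
    obtain ⟨j, hji, hj⟩ := hpartner i
    rw [← card_pair hji.symm]
    congr 1
    ext c
    simp only [mem_filter, mem_univ, true_and, mem_insert, mem_singleton]
    refine ⟨fun hc => by_contra fun h => ?_, by rintro (rfl | rfl) <;> simp [hj]⟩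
    rw [not_or] at h
    exact hno i j c hji.symm (Ne.symm h.1) (Ne.symm h.2)
      (((hslope_one hji.symm).2 hj).trans ((hslope_one (Ne.symm h.1)).2 hc).symm)
  have hsum : Fintype.card F = ∑ _v ∈ univ.image (fun c => g c - c), 2 := by
    rw [← card_univ, card_eq_sum_card_image (fun c => g c - c)]
    refine sum_congr rfl fun v hv => ?_
    obtain ⟨i, -, rfl⟩ := mem_image.1 hv
    exact hfiber i
  rw [sum_const, smul_eq_mul] at hsum
  exact Nat.not_even_iff_odd.2 hodd ⟨_, hsum.trans (mul_two _)⟩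

end

theorem stmt_0_general (k : ℕ)
    (F : Type) [Field F] [Fintype F] (hcard : Fintype.card F = k)
    (π : Equiv.Perm F) :
    ∃ f : MvPolynomial (Fin 2) F,
      f.totalDegree = k / 2 ∧ ∀ c : F, MvPolynomial.eval ![c, π c] f = 0 := by
  classical
  subst hcard
  obtain ⟨n, hn | hn⟩ := Nat.even_or_odd' (Fintype.card F)
  · obtain ⟨f, -, hf, hfS⟩ :=
      exists_ne_zero_totalDegree_eq_forall_eval_eq_zero π n univ (by rw [card_univ, hn])
    exact ⟨f, by omega, fun c => hfS c (mem_univ c)⟩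
  · obtain ⟨i, j, l, hij, hil, hjl, hslope⟩ :=
      exists_slope_eq_of_odd_card ⟨n, hn⟩ π.injective
    have hijl : #{i, j, l} = 3 := by
      rw [card_insert_of_notMem (by simp [hij, hil]), card_pair hjl]
    obtain ⟨f, hf₀, hf, hfS⟩ := exists_ne_zero_totalDegree_eq_forall_eval_eq_zero π (n - 1)
      (univ \ {i, j, l}) (by rw [card_sdiff_of_subset (subset_univ _), hijl, card_univ]; omega)
    refine ⟨lPoly π i j * f, ?_, fun c => ?_⟩
    · rw [totalDegree_mul_of_isDomain (lPoly_ne_zero π hij) hf₀, totalDegree_lPoly π hij, hf]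
      have := card_le_univ {i, j, l}
      omega
    rw [eval_mul, mul_eq_zero]
    by_cases hc : c ∈ ({i, j, l} : Finset F)
    · simp only [mem_insert, mem_singleton] at hc
      obtain rfl | rfl | rfl := hc
      · exact .inl (eval_lPoly_left π c j)
      · exact .inl (eval_lPoly_right π i c)
      · exact .inl (eval_lPoly_eq_zero_of_slope_eq hij hil hslope)
    · exact .inr (hfS c (mem_sdiff.2 ⟨mem_univ c, hc⟩))

/-- For a prime power `k ≥ 2` and a permutation `π` of the field with `k`
elements, there is a polynomial `f ∈ F_k[x,y]` of total degree `⌊k/2⌋` with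
`f(c, π c) = 0` for all `c`. -/
theorem stmt_0 (k : ℕ) (hk : 2 ≤ k) (hpp : IsPrimePow k)
    (F : Type) [Field F] [Fintype F] (hcard : Fintype.card F = k)
    (π : Equiv.Perm F) :
    ∃ f : MvPolynomial (Fin 2) F,
      f.totalDegree = k / 2 ∧ ∀ c : F, MvPolynomial.eval ![c, π c] f = 0 :=
  stmt_0_general k F hcard π
end

section
/- Let k ≥ 3 be a prime power, π a permutation of F_k, and (a,b) ∈ F_k × F_k with π(a) ≠ b. Then there exists a polynomial f ∈ F_k[x,y] of total degree k−2 such that f(c, π(c)) = 0 for all c ∈ F_k and f(a,b) ≠ 0. -/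
/-!
Let `i = π⁻¹ b ≠ a` and fix `j ∉ {a, i}`. The line through `(i, b)` and `(j, π j)` together with
the lines through `(a, π a)` and `(c, π c)` for `c ∉ {a, i, j}` are `k - 2` non-vertical lines,
none passing through `(a, b)`, and they cover the graph of `π`: the point `(a, π a)` lies on the
second family as soon as `k > 3`, while for `k = 3` the whole graph is a line, because in
characteristic `3` the three points of the graph sum to zero.
-/

open MvPolynomial Finset

theorem MvPolynomial.totalDegree_finsetProd_of_isDomain {ι σ R : Type*} [CommRing R] [IsDomain R]
    (s : Finset ι) (f : ι → MvPolynomial σ R) (hf : ∀ i ∈ s, f i ≠ 0) :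
    (∏ i ∈ s, f i).totalDegree = ∑ i ∈ s, (f i).totalDegree := by
  induction s using Finset.cons_induction with
  | empty => simp
  | cons i s hi ih =>
    rw [prod_cons, sum_cons, totalDegree_mul_of_isDomain (hf i (mem_cons_self i s))
      (prod_ne_zero_iff.2 fun j hj => hf j (mem_cons_of_mem hj)),
      ih fun j hj => hf j (mem_cons_of_mem hj)]

lemma Equiv.Perm.mem_compl_pair_symm_iff {α : Type*} [Fintype α] [DecidableEq α]
    {π : Equiv.Perm α} {a b c : α} : c ∈ ({a, π.symm b} : Finset α)ᶜ ↔ c ≠ a ∧ π c ≠ b := by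
  simp [Equiv.eq_symm_apply]

lemma Equiv.Perm.card_compl_pair_symm {α : Type*} [Fintype α] [DecidableEq α]
    {π : Equiv.Perm α} {a b : α} (hab : π a ≠ b) :
    #({a, π.symm b} : Finset α)ᶜ = Fintype.card α - 2 := by
  rw [card_compl, card_pair (Ne.symm (π.symm_apply_eq.not.2 hab.symm))]

variable {F : Type*} [Field F]

/-- The paper's `L^π_{i,j}` is `lineThrough (i, π i) (j, π j)`. -/
noncomputable def lineThrough (p q : F × F) : MvPolynomial (Fin 2) F :=
  C (q.1 - p.1) * (X 1 - C p.2) - C (q.2 - p.2) * (X 0 - C p.1)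

@[simp]
lemma eval_lineThrough (p q : F × F) (x y : F) :
    eval ![x, y] (lineThrough p q) = (q.1 - p.1) * (y - p.2) - (q.2 - p.2) * (x - p.1) := by
  simp [lineThrough]

lemma totalDegree_lineThrough {p q : F × F} (h : p.1 ≠ q.1) :
    (lineThrough p q).totalDegree = 1 := by
  refine le_antisymm ?_ (Nat.one_le_iff_ne_zero.2 fun h0 => ?_)
  · have hX : ∀ (i : Fin 2) (u v : F),
        (C u * (X i - C v) : MvPolynomial (Fin 2) F).totalDegree ≤ 1 :=
      fun i u v => (totalDegree_mul _ _).trans <| by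
        simpa using (totalDegree_sub (X i) (C v)).trans (by simp)
    exact (totalDegree_sub _ _).trans (max_le (hX _ _ _) (hX _ _ _))
  · -- a constant polynomial cannot take the values `0` at `p` and `q₁ - p₁ ≠ 0` at `p + (0, 1)`
    rw [totalDegree_eq_zero_iff_eq_C] at h0
    have h1 := congrArg (eval ![p.1, p.2]) h0
    have h2 := congrArg (eval ![p.1, p.2 + 1]) h0
    simp only [eval_lineThrough, eval_C] at h1 h2
    exact sub_ne_zero.2 h.symm (by linear_combination h2 - h1)

lemma totalDegree_prod_lineThrough {ι : Type*} (s : Finset ι) (p q : ι → F × F)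
    (h : ∀ i ∈ s, (p i).1 ≠ (q i).1) :
    (∏ i ∈ s, lineThrough (p i) (q i)).totalDegree = #s := by
  rw [totalDegree_finsetProd_of_isDomain,
    sum_congr rfl fun i hi => totalDegree_lineThrough (h i hi), sum_const, smul_eq_mul, mul_one]
  intro i hi hzero
  simpa [hzero] using totalDegree_lineThrough (h i hi)

lemma eval_lineThrough_graph_of_card_eq_three [Fintype F] (hF : Fintype.card F = 3)
    (σ : Equiv.Perm F) {x y z : F} (hxy : x ≠ y) (hxz : x ≠ z) (hyz : y ≠ z) :
    eval ![z, σ z] (lineThrough (x, σ x) (y, σ y)) = 0 := by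
  classical
  have h3 : (3 : F) = 0 := by exact_mod_cast hF ▸ FiniteField.cast_card_eq_zero F
  have huniv : ({x, y, z} : Finset F) = univ :=
    eq_univ_of_card _ (by rw [card_insert_of_notMem (by simp [hxy, hxz]),
      card_insert_of_notMem (by simp [hyz]), card_singleton, hF])
  have hsum : ∀ g : F → F, ∑ u, g u = g x + g y + g z := fun g => by
    rw [← huniv, sum_insert (by simp [hxy, hxz]), sum_insert (by simp [hyz]), sum_singleton,
      add_assoc]
  have hzero : ∑ u : F, u = 0 := by simpa using FiniteField.sum_pow_lt_card_sub_one F 1 (by omega)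
  have hx : x + y + z = 0 := hsum id ▸ hzero
  have hσ : σ x + σ y + σ z = 0 := hsum σ ▸ (Equiv.sum_comp σ id).trans hzero
  simp only [eval_lineThrough]
  linear_combination (σ x - σ y) * hx + (y - x) * hσ + (x * σ y - y * σ x) * h3

section GraphCover

variable [Fintype F] [DecidableEq F] (π : Equiv.Perm F) (a b j : F)

/-- With `i = π⁻¹ b`, the product of `L^π_{i,j}` and of the `L^π_{a,c}` for `c ∉ {a, i, j}`. -/
noncomputable def graphCover : MvPolynomial (Fin 2) F :=
  ∏ c ∈ ({a, π.symm b} : Finset F)ᶜ,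
    lineThrough (if c = j then (π.symm b, b) else (a, π a)) (c, π c)

variable {π a b j}

lemma totalDegree_graphCover (hab : π a ≠ b) (hjb : π j ≠ b) :
    (graphCover π a b j).totalDegree = Fintype.card F - 2 := by
  rw [graphCover, totalDegree_prod_lineThrough _ _ _ fun c hc => ?_, π.card_compl_pair_symm hab]
  obtain ⟨hca, -⟩ := π.mem_compl_pair_symm_iff.1 hc
  split_ifs with hcj
  · exact hcj ▸ π.symm_apply_eq.not.2 hjb.symm
  · exact Ne.symm hca

lemma eval_graphCover_ne_zero (hab : π a ≠ b) (hjb : π j ≠ b) :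
    eval ![a, b] (graphCover π a b j) ≠ 0 := by
  rw [graphCover, map_prod, prod_ne_zero_iff]
  intro c hc
  obtain ⟨hca, -⟩ := π.mem_compl_pair_symm_iff.1 hc
  split_ifs with hcj
  · subst hcj
    simp only [eval_lineThrough, sub_self, mul_zero, zero_sub, neg_ne_zero]
    exact mul_ne_zero (sub_ne_zero.2 hjb) (sub_ne_zero.2 (Ne.symm (π.symm_apply_eq.not.2 hab.symm)))
  · simp only [eval_lineThrough, sub_self, mul_zero, sub_zero]
    exact mul_ne_zero (sub_ne_zero.2 hca) (sub_ne_zero.2 hab.symm)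

lemma eval_graphCover_graph (hab : π a ≠ b) (hja : j ≠ a) (hjb : π j ≠ b) (c : F) :
    eval ![c, π c] (graphCover π a b j) = 0 := by
  have hj : j ∈ ({a, π.symm b} : Finset F)ᶜ := π.mem_compl_pair_symm_iff.2 ⟨hja, hjb⟩
  rw [graphCover, map_prod]
  by_cases hc : c ∈ ({a, π.symm b} : Finset F)ᶜ
  · exact prod_eq_zero hc (by split_ifs <;> simp [mul_comm])
  obtain rfl | rfl : a = c ∨ π.symm b = c := by
    rw [mem_compl, not_not, mem_insert, mem_singleton] at hc
    exact hc.imp Eq.symm Eq.symm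
  · by_cases hd : ∃ d ∈ ({a, π.symm b} : Finset F)ᶜ, d ≠ j
    · obtain ⟨d, hd, hdj⟩ := hd
      exact prod_eq_zero hd (by simp [hdj])
    · -- `j` is the only point off `{c, π⁻¹ b}`, so the three graph points lie on one line
      have h3 : Fintype.card F = 3 := by
        have := π.card_compl_pair_symm hab
        rw [card_eq_one.2 ⟨j, eq_singleton_iff_unique_mem.2 ⟨hj, by simpa using hd⟩⟩] at this
        omega
      refine prod_eq_zero hj ?_
      simpa using eval_lineThrough_graph_of_card_eq_three h3 π
        (π.symm_apply_eq.not.2 hjb.symm) (π.symm_apply_eq.not.2 hab.symm) hja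
  · exact prod_eq_zero hj (by simp)

end GraphCover

theorem stmt_1_general (k : ℕ) (hk : 3 ≤ k)
    (F : Type) [Field F] [Fintype F] (hcard : Fintype.card F = k)
    (π : Equiv.Perm F) (a b : F) (hab : π a ≠ b) :
    ∃ f : MvPolynomial (Fin 2) F,
      f.totalDegree = k - 2 ∧ (∀ c : F, MvPolynomial.eval ![c, π c] f = 0) ∧
        MvPolynomial.eval ![a, b] f ≠ 0 := by
  classical
  obtain ⟨j, hj⟩ : ({a, π.symm b} : Finset F)ᶜ.Nonempty :=
    card_pos.1 (by rw [π.card_compl_pair_symm hab]; omega)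
  obtain ⟨hja, hjb⟩ := π.mem_compl_pair_symm_iff.1 hj
  exact ⟨graphCover π a b j, hcard ▸ totalDegree_graphCover hab hjb,
    eval_graphCover_graph hab hja hjb, eval_graphCover_ne_zero hab hjb⟩

/-- For a prime power `k ≥ 3`, a permutation `π` of `F_k`, and `(a,b)` with
`π a ≠ b`, there is a polynomial of total degree `k - 2` vanishing on the graph of `π`
and nonzero at `(a,b)`. -/
theorem stmt_1 (k : ℕ) (hk : 3 ≤ k) (hpp : IsPrimePow k)
    (F : Type) [Field F] [Fintype F] (hcard : Fintype.card F = k)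
    (π : Equiv.Perm F) (a b : F) (hab : π a ≠ b) :
    ∃ f : MvPolynomial (Fin 2) F,
      f.totalDegree = k - 2 ∧ (∀ c : F, MvPolynomial.eval ![c, π c] f = 0) ∧
        MvPolynomial.eval ![a, b] f ≠ 0 :=
  stmt_1_general k hk F hcard π a b hab
end

section
/- Let k be an odd prime power and π a permutation of F_k. Then there exist distinct a, b₁, b₂ ∈ F_k such that (π(b₁) − π(a))/(b₁ − a) = (π(b₂) − π(a))/(b₂ − a); equivalently, the points (a, π(a)), (b₁, π(b₁)), (b₂, π(b₂)) are collinear. -/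
/-!
Fix `a`. If the slopes `(π b - π a) / (b - a)`, `b ≠ a`, were pairwise distinct, they would run
through all of `Fˣ`, so their product would be `-1` by Wilson's theorem for `F`. But that product is
`∏ (π b - π a) / ∏ (b - a) = (-1) / (-1) = 1`, since both numerator and denominator are again
products of all nonzero elements. Hence `-1 = 1`, i.e. `F` has characteristic `2`, contradicting
that `#F` is odd.
-/

open Finset

namespace FiniteField

variable {F : Type*} [Field F] [Fintype F] [DecidableEq F]

theorem prod_univ_erase_zero : ∏ x ∈ univ.erase (0 : F), x = -1 := by
  have h := congrArg ((↑) : Fˣ → F) (prod_univ_units_id_eq_neg_one (K := F))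
  push_cast at h
  rw [← h]
  exact prod_bij' (fun x hx => Units.mk0 x (ne_of_mem_erase hx)) (fun u _ => u) (by simp) (by simp)
    (by simp) (by simp) (by simp)

theorem prod_univ_erase_sub_apply (e : F ≃ F) (a : F) :
    ∏ b ∈ univ.erase a, (e b - e a) = -1 := by
  rw [← prod_univ_erase_zero]
  exact prod_equiv (e.trans (Equiv.subRight (e a))) (by simp [sub_eq_zero]) (by simp)

theorem prod_eq_neg_one_of_injOn {α : Type*} {s : Finset α} {f : α → F}
    (hf : Set.InjOn f s) (hf₀ : ∀ x ∈ s, f x ≠ 0) (hs : #s = Fintype.card F - 1) :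
    ∏ x ∈ s, f x = -1 := by
  have himage : s.image f = univ.erase 0 := by
    refine eq_of_subset_of_card_le (fun y hy => ?_) ?_
    · obtain ⟨x, hx, rfl⟩ := mem_image.1 hy
      exact mem_erase.2 ⟨hf₀ x hx, mem_univ _⟩
    · rw [card_image_of_injOn hf, hs, card_erase_of_mem (mem_univ _), card_univ]
  rw [← prod_univ_erase_zero, ← himage, prod_image hf]

theorem prod_univ_erase_slope (π : F ≃ F) (a : F) : ∏ b ∈ univ.erase a, slope π a b = 1 := by
  simp_rw [slope_def_field, prod_div_distrib, prod_univ_erase_sub_apply π]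
  have hden : ∏ b ∈ univ.erase a, (b - a) = -1 := prod_univ_erase_sub_apply (Equiv.refl F) a
  rw [hden, div_neg, div_one, neg_neg]

theorem not_injOn_slope (hF : ringChar F ≠ 2) (π : F ≃ F) (a : F) :
    ¬ Set.InjOn (slope π a) (univ.erase a : Finset F) := by
  intro hinj
  have hslope₀ : ∀ b ∈ univ.erase a, slope π a b ≠ 0 := fun b hb => by
    have hb : b ≠ a := ne_of_mem_erase hb
    rw [slope_def_field]
    exact div_ne_zero (sub_ne_zero.2 (π.injective.ne hb)) (sub_ne_zero.2 hb)
  have h := prod_eq_neg_one_of_injOn hinj hslope₀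
    (by rw [card_erase_of_mem (mem_univ _), card_univ])
  exact Ring.neg_one_ne_one_of_char_ne_two hF (h ▸ prod_univ_erase_slope π a)

end FiniteField

theorem stmt_2_general (k : ℕ) (hodd : Odd k)
    (F : Type) [Field F] [Fintype F] (hcard : Fintype.card F = k)
    (π : Equiv.Perm F) :
    ∃ a b₁ b₂ : F, a ≠ b₁ ∧ a ≠ b₂ ∧ b₁ ≠ b₂ ∧
      (π b₁ - π a) * (b₂ - a) = (π b₂ - π a) * (b₁ - a) := by
  classical
  have hF : ringChar F ≠ 2 := fun h => by
    simpa [hcard, Nat.odd_iff.1 hodd] using FiniteField.even_card_iff_char_two.1 h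
  obtain ⟨b₁, hb₁, b₂, hb₂, hslope, hne⟩ : ∃ b₁ ∈ (univ.erase 0 : Finset F), ∃ b₂ ∈ univ.erase 0,
      slope π 0 b₁ = slope π 0 b₂ ∧ b₁ ≠ b₂ := by
    simpa [Set.InjOn] using FiniteField.not_injOn_slope hF π 0
  have hb₁ : b₁ - 0 ≠ 0 := sub_ne_zero.2 (ne_of_mem_erase hb₁)
  have hb₂ : b₂ - 0 ≠ 0 := sub_ne_zero.2 (ne_of_mem_erase hb₂)
  rw [slope_def_field, slope_def_field, div_eq_div_iff hb₁ hb₂] at hslope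
  exact ⟨0, b₁, b₂, (sub_ne_zero.1 hb₁).symm, (sub_ne_zero.1 hb₂).symm, hne, hslope⟩

/-- For an odd prime power `k` and a permutation `π` of `F_k`, there are
distinct `a, b₁, b₂` with `(π b₁ - π a)/(b₁ - a) = (π b₂ - π a)/(b₂ - a)`,
i.e. the three points `(a, π a), (b₁, π b₁), (b₂, π b₂)` are collinear. -/
theorem stmt_2 (k : ℕ) (hpp : IsPrimePow k) (hodd : Odd k)
    (F : Type) [Field F] [Fintype F] (hcard : Fintype.card F = k)
    (π : Equiv.Perm F) :
    ∃ a b₁ b₂ : F, a ≠ b₁ ∧ a ≠ b₂ ∧ b₁ ≠ b₂ ∧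
      (π b₁ - π a) * (b₂ - a) = (π b₂ - π a) * (b₁ - a) :=
  stmt_2_general k hodd F hcard π
end

section
/- Let F be a field, let A₁, …, Aₙ be non-empty finite subsets of F, and let B = A₁ × ⋯ × Aₙ. Suppose P ∈ F[x₁,…,xₙ] has total degree d and does not vanish on all of B. Let S = |A₁| + ⋯ + |Aₙ| and t = max |Aᵢ|. If S ≥ n + d and t ≥ 2, then the number of points of B at which P is nonzero is at least t^{(S−n−d)/(t−1)}. -/
/-!
Reduce `P` modulo the polynomials `∏_{a ∈ Aᵢ} (xᵢ - a)`: this keeps its values on the box,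
does not increase its degree, and afterwards `deg_{x_i} P < |Aᵢ|` for every `i`. Then induct on
the number of variables. Writing `P = L · x₀ᵉ + (lower terms in x₀)`, every point `y` of the
smaller box with `L(y) ≠ 0` gives a univariate polynomial of degree `e` in `x₀`, hence at least
`q = |A₀| - e` non-zeros on `A₀`; induction bounds the number of such `y`. The exponents add up
because `t ^ ((q - 1) / (t - 1)) ≤ q` for `1 ≤ q ≤ t` (Bernoulli's inequality).
-/

open Finset

theorem Real.rpow_div_sub_one_le {t q : ℝ} (ht : 1 < t) (hq : 1 ≤ q) (hqt : q ≤ t) :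
    t ^ ((q - 1) / (t - 1)) ≤ q := by
  have ht' : 0 < t - 1 := sub_pos.2 ht
  have h := rpow_one_add_le_one_add_mul_self (s := t - 1) (by linarith)
    (p := (q - 1) / (t - 1)) (div_nonneg (by linarith) ht'.le)
    ((div_le_one ht').2 (by linarith))
  rwa [add_sub_cancel, div_mul_cancel₀ _ ht'.ne', add_sub_cancel] at h

theorem Finset.card_filter_piFinset_succ {α : Type*} [DecidableEq α] {n : ℕ}
    (A : Fin (n + 1) → Finset α) (p : (Fin (n + 1) → α) → Prop) [DecidablePred p] :
    #{x ∈ Fintype.piFinset A | p x} =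
      ∑ y ∈ Fintype.piFinset (Fin.tail A), #{c ∈ A 0 | p (Fin.cons c y)} := by
  have h : ∀ x ∈ {x ∈ Fintype.piFinset A | p x}, Fin.tail x ∈ Fintype.piFinset (Fin.tail A) :=
    fun x hx ↦ (Fin.mem_piFinset_iff_zero_tail.1 (mem_filter.1 hx).1).2
  rw [card_eq_sum_card_fiberwise h]
  refine sum_congr rfl fun y hy ↦ card_nbij' (fun x ↦ x 0) (fun c ↦ Fin.cons c y) ?_ ?_ ?_ ?_
  · intro x hx
    simp only [mem_coe, mem_filter, Fin.mem_piFinset_iff_zero_tail] at hx ⊢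
    obtain ⟨⟨⟨hx0, -⟩, hpx⟩, rfl⟩ := hx
    exact ⟨hx0, by rwa [Fin.cons_self_tail]⟩
  · intro c hc
    simp only [mem_coe, mem_filter, Fin.mem_piFinset_iff_zero_tail, Fin.cons_zero,
      Fin.tail_cons] at hc ⊢
    exact ⟨⟨⟨hc.1, hy⟩, hc.2⟩, trivial⟩
  · intro x hx
    simp only [mem_coe, mem_filter] at hx
    simp [← hx.2]
  · intro c _
    simp

theorem Polynomial.card_sub_natDegree_le_card_filter_eval_ne_zero {R : Type*} [CommRing R]
    [IsDomain R] [DecidableEq R] {p : Polynomial R} (hp : p ≠ 0) (A : Finset R) :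
    #A - p.natDegree ≤ #{c ∈ A | p.eval c ≠ 0} := by
  have hroots : #{c ∈ A | p.eval c = 0} ≤ p.natDegree :=
    card_le_degree_of_subset_roots fun c hc ↦ by
      rw [Finset.filter_val, Multiset.mem_filter] at hc
      exact (mem_roots hp).2 hc.2
  have := card_filter_add_card_filter_not (s := A) (fun c ↦ p.eval c = 0)
  simp only [← ne_eq] at this
  omega

namespace MvPolynomial

open MonomialOrder in
theorem exists_degreeOf_lt_card_eval_eq {σ R : Type*} [CommRing R] [Nontrivial R]
    [LinearOrder σ] [WellFoundedGT σ]
    (S : σ → Finset R) (hS : ∀ i, (S i).Nonempty) (f : MvPolynomial σ R) :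
    ∃ r : MvPolynomial σ R, r.totalDegree ≤ f.totalDegree ∧ (∀ i, r.degreeOf i < #(S i)) ∧
      ∀ x : σ → R, (∀ i, x i ∈ S i) → eval x r = eval x f := by
  set b : σ → MvPolynomial σ R := fun i ↦ ∏ s ∈ S i, (X i - C s)
  have hb_monic (i : σ) : degLex.Monic (b i) := Monic.prod fun s _ ↦ degLex.monic_X_sub_C i s
  have hb_degree (i : σ) : degLex.degree (b i) = Finsupp.single i #(S i) := by
    rw [degree_prod_of_regular fun s _ ↦ by
      rw [(degLex.monic_X_sub_C i s).leadingCoeff_eq_one]; exact isRegular_one]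
    simp [degree_X_sub_C]
  have hb_eval (x : σ → R) (hx : ∀ i, x i ∈ S i) (i : σ) : eval x (b i) = 0 := by
    simp only [b, map_prod]
    exact prod_eq_zero (hx i) (by simp)
  obtain ⟨g, r, hf, hg, hr⟩ :=
    degLex.div (fun i ↦ by rw [(hb_monic i).leadingCoeff_eq_one]; exact isUnit_one) f
  rw [Finsupp.linearCombination_apply, Finsupp.sum] at hf
  refine ⟨r, ?_, fun i ↦ ?_, fun x hx ↦ ?_⟩
  · have hsum : (∑ i ∈ g.support, g i • b i).totalDegree ≤ f.totalDegree :=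
      (totalDegree_finsetSum _ _).trans <| Finset.sup_le fun i _ ↦ by
        rw [smul_eq_mul, mul_comm]; exact degLex_totalDegree_monotone (hg i)
    rw [eq_sub_of_add_eq' hf.symm]
    exact (totalDegree_sub _ _).trans (max_le le_rfl hsum)
  · rw [degreeOf_lt_iff (card_pos.2 (hS i))]
    intro m hm
    simpa [hb_degree, Finsupp.single_le_iff] using hr m hm i
  · have hcomb : eval x (∑ i ∈ g.support, g i • b i) = 0 := by
      simp [map_sum, hb_eval x hx]
    rw [hf, map_add, hcomb, zero_add]

variable {R : Type*} [CommRing R] [IsDomain R] [DecidableEq R] {n : ℕ}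

theorem card_sub_degreeOf_le_card_filter_eval_cons_ne_zero (P : MvPolynomial (Fin (n + 1)) R)
    (A : Finset R) {y : Fin n → R} (hy : eval y (finSuccEquiv R n P).leadingCoeff ≠ 0) :
    #A - P.degreeOf 0 ≤ #{c ∈ A | eval (Fin.cons c y) P ≠ 0} := by
  have hdeg : ((finSuccEquiv R n P).map (eval y)).natDegree = P.degreeOf 0 := by
    rw [Polynomial.natDegree_map_of_leadingCoeff_ne_zero _ hy, natDegree_finSuccEquiv]
  have hne : (finSuccEquiv R n P).map (eval y) ≠ 0 := fun h ↦ hy <| by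
    rw [← Polynomial.leadingCoeff_map_of_leadingCoeff_ne_zero _ hy, h,
      Polynomial.leadingCoeff_zero]
  simp_rw [eval_eq_eval_mv_eval', ← hdeg]
  exact Polynomial.card_sub_natDegree_le_card_filter_eval_ne_zero hne A

theorem card_sub_degreeOf_mul_le_card_filter_eval_ne_zero (P : MvPolynomial (Fin (n + 1)) R)
    (A : Fin (n + 1) → Finset R) :
    (#(A 0) - P.degreeOf 0) *
        #{y ∈ Fintype.piFinset (Fin.tail A) | eval y (finSuccEquiv R n P).leadingCoeff ≠ 0} ≤
      #{x ∈ Fintype.piFinset A | eval x P ≠ 0} := by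
  rw [card_filter_piFinset_succ, mul_comm, ← smul_eq_mul, ← sum_const, sum_filter]
  gcongr with y
  split_ifs with hy
  · exact card_sub_degreeOf_le_card_filter_eval_cons_ne_zero P (A 0) hy
  · exact Nat.zero_le _

theorem rpow_le_card_filter_eval_ne_zero {t : ℝ} (ht : 1 < t) :
    ∀ {n : ℕ} (A : Fin n → Finset R), (∀ i, (#(A i) : ℝ) ≤ t) →
      ∀ {P : MvPolynomial (Fin n) R}, P ≠ 0 → (∀ i, P.degreeOf i < #(A i)) →
      t ^ ((∑ i, (#(A i) : ℝ) - n - P.totalDegree) / (t - 1)) ≤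
        #{x ∈ Fintype.piFinset A | eval x P ≠ 0}
  | 0, A, _, P, hP, _ => by
    rw [P.eq_C_of_isEmpty] at hP ⊢
    simp [C_ne_zero.mp hP]
  | n + 1, A, hAt, P, hP, hdeg => by
    set L := (finSuccEquiv R n P).leadingCoeff
    set e := P.degreeOf 0
    have hL : L ≠ 0 := by simpa [L] using hP
    have hLdeg (j : Fin n) : L.degreeOf j < #(Fin.tail A j) :=
      (degreeOf_coeff_finSuccEquiv P j _).trans_lt (hdeg j.succ)
    have hLtot : L.totalDegree + e ≤ P.totalDegree :=
      calc L.totalDegree + e = L.totalDegree + (finSuccEquiv R n P).natDegree := by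
            rw [natDegree_finSuccEquiv]
        _ ≤ P.totalDegree := totalDegree_coeff_finSuccEquiv_add_le P _ hL
    have he : e < #(A 0) := hdeg 0
    set q := #(A 0) - e
    have hfibre : t ^ (((q : ℝ) - 1) / (t - 1)) ≤ q :=
      Real.rpow_div_sub_one_le ht (by norm_cast; omega)
        ((Nat.cast_le.2 (Nat.sub_le _ _)).trans (hAt 0))
    have IH := rpow_le_card_filter_eval_ne_zero ht (Fin.tail A) (fun j ↦ hAt j.succ) hL hLdeg
    have hexp : (∑ i, (#(A i) : ℝ) - (n + 1 : ℕ) - P.totalDegree) / (t - 1) ≤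
        ((q : ℝ) - 1) / (t - 1) + (∑ i, (#(Fin.tail A i) : ℝ) - n - L.totalDegree) / (t - 1) := by
      rw [← add_div, Fin.sum_univ_succ]
      gcongr
      simp only [Fin.tail, q]
      push_cast [he.le]
      have : (L.totalDegree : ℝ) + e ≤ P.totalDegree := by exact_mod_cast hLtot
      linarith
    calc t ^ ((∑ i, (#(A i) : ℝ) - (n + 1 : ℕ) - P.totalDegree) / (t - 1))
        ≤ t ^ (((q : ℝ) - 1) / (t - 1) +
          (∑ i, (#(Fin.tail A i) : ℝ) - n - L.totalDegree) / (t - 1)) :=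
          Real.rpow_le_rpow_of_exponent_le ht.le hexp
      _ = t ^ (((q : ℝ) - 1) / (t - 1)) *
          t ^ ((∑ i, (#(Fin.tail A i) : ℝ) - n - L.totalDegree) / (t - 1)) :=
          Real.rpow_add (by linarith) _ _
      _ ≤ q * #{y ∈ Fintype.piFinset (Fin.tail A) | eval y L ≠ 0} :=
          mul_le_mul hfibre IH (by positivity) (by positivity)
      _ ≤ #{x ∈ Fintype.piFinset A | eval x P ≠ 0} := by
          exact_mod_cast card_sub_degreeOf_mul_le_card_filter_eval_ne_zero P A

end MvPolynomial

theorem stmt_6_general (F : Type) [Field F] [DecidableEq F] (n : ℕ)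
    (A : Fin n → Finset F)
    (P : MvPolynomial (Fin n) F)
    (hP : ∃ x ∈ Fintype.piFinset A, MvPolynomial.eval x P ≠ 0)
    (ht : 2 ≤ Finset.univ.sup fun i => (A i).card) :
    ((Finset.univ.sup fun i => (A i).card : ℕ) : ℝ) ^
        (((∑ i, ((A i).card : ℝ)) - n - P.totalDegree) /
          (((Finset.univ.sup fun i => (A i).card : ℕ) : ℝ) - 1)) ≤
      (((Fintype.piFinset A).filter fun x => MvPolynomial.eval x P ≠ 0).card : ℝ) := by
  obtain ⟨x₀, hx₀, hPx₀⟩ := hP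
  have hA (i : Fin n) : (A i).Nonempty := ⟨x₀ i, Fintype.mem_piFinset.1 hx₀ i⟩
  obtain ⟨Q, hQP, hQdeg, hQeval⟩ := MvPolynomial.exists_degreeOf_lt_card_eval_eq A hA P
  have hQ : Q ≠ 0 := by
    rintro rfl
    exact hPx₀ (by rw [← hQeval x₀ (Fintype.mem_piFinset.1 hx₀), map_zero])
  have hfilter : {x ∈ Fintype.piFinset A | MvPolynomial.eval x Q ≠ 0} =
      {x ∈ Fintype.piFinset A | MvPolynomial.eval x P ≠ 0} :=
    filter_congr fun x hx ↦ by rw [hQeval x (Fintype.mem_piFinset.1 hx)]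
  set t : ℕ := univ.sup fun i ↦ #(A i)
  have ht1 : (1 : ℝ) < t := by exact_mod_cast ht
  have hAt (i : Fin n) : (#(A i) : ℝ) ≤ t := by
    exact_mod_cast le_sup (f := fun i ↦ #(A i)) (mem_univ i)
  rw [← hfilter]
  refine (Real.rpow_le_rpow_of_exponent_le ht1.le ?_).trans
    (MvPolynomial.rpow_le_card_filter_eval_ne_zero ht1 A hAt hQ hQdeg)
  have : (Q.totalDegree : ℝ) ≤ P.totalDegree := by exact_mod_cast hQP
  gcongr

/-- Bosek–Grytczuk–Gutowski–Serra–Zajac corollary of Alon–Füredi: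
if `P` has total degree `d`, does not vanish on all of the box `B = ∏ Aᵢ`,
`S = ∑ |Aᵢ| ≥ n + d` and `t = max |Aᵢ| ≥ 2`, then `P` is nonzero at
at least `t^((S - n - d)/(t - 1))` points of `B`. -/
theorem stmt_6 (F : Type) [Field F] [DecidableEq F] (n : ℕ)
    (A : Fin n → Finset F) (hA : ∀ i, (A i).Nonempty)
    (P : MvPolynomial (Fin n) F)
    (hP : ∃ x ∈ Fintype.piFinset A, MvPolynomial.eval x P ≠ 0)
    (hS : n + P.totalDegree ≤ ∑ i, (A i).card)
    (ht : 2 ≤ Finset.univ.sup fun i => (A i).card) :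
    ((Finset.univ.sup fun i => (A i).card : ℕ) : ℝ) ^
        (((∑ i, ((A i).card : ℝ)) - n - P.totalDegree) /
          (((Finset.univ.sup fun i => (A i).card : ℕ) : ℝ) - 1)) ≤
      (((Fintype.piFinset A).filter fun x => MvPolynomial.eval x P ≠ 0).card : ℝ) :=
  stmt_6_general F n A P hP ht
end

section
/- Let k > 2 be a prime power and G a connected simple graph on n vertices with m edges. If χ_DP(G) ≤ k and m ≤ 2n − (k−3)/(k−2), then P_DP(G, k) ≥ k^{((2n−m)(k−2) − (k−3))/(k−1)}. -/
/-!
Work over a field `F` with `k` elements. Switching the labeling along a breadth-first spanning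
tree makes it the identity on the `n - 1` tree edges without changing the number of proper
colourings, and `χ_DP(G) ≤ k` still provides one proper colouring `κ` of the switched labeling.
For every edge `uv` take a polynomial in `x_u, x_v` that vanishes whenever `σ_uv x_u = x_v` but
not at `κ`: `x_v - x_u` on tree edges, and one of degree `k - 2` on the other edges. Their product
has degree `(n - 1) + (m - n + 1)(k - 2)`, is nonzero at `κ`, and every point where it is nonzero
is a proper colouring, so the Alon–Füredi bound `k ^ (n - deg / (k - 1))` on the number of its
nonzeros is the claimed bound.
-/

open MvPolynomial Finset Equiv

section ExponentReduction

variable {F : Type*} [Field F] [Fintype F] {ι : Type*}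

/-- Since `a ^ q = a` on a field with `q` elements, a positive exponent may be reduced into
`[1, q - 1]`; zero stays zero. -/
def reduceExp (q e : ℕ) : ℕ := if e = 0 then 0 else (e - 1) % (q - 1) + 1

lemma reduceExp_zero (q : ℕ) : reduceExp q 0 = 0 := rfl

lemma reduceExp_le (q e : ℕ) : reduceExp q e ≤ e := by
  unfold reduceExp
  split_ifs
  · omega
  · have := Nat.mod_le (e - 1) (q - 1)
    omega

lemma reduceExp_le_sub_one {q : ℕ} (hq : 1 < q) (e : ℕ) : reduceExp q e ≤ q - 1 := by
  unfold reduceExp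
  split_ifs
  · omega
  · have := Nat.mod_lt (e - 1) (show 0 < q - 1 by omega)
    omega

lemma pow_reduceExp (a : F) (e : ℕ) : a ^ reduceExp (Fintype.card F) e = a ^ e := by
  unfold reduceExp
  split_ifs with he
  · rw [he]
  rcases eq_or_ne a 0 with rfl | ha
  · rw [zero_pow (by omega), zero_pow he]
  obtain ⟨c, rfl⟩ := Nat.exists_eq_succ_of_ne_zero he
  conv_rhs => rw [← Nat.mod_add_div c (Fintype.card F - 1)]
  rw [Nat.succ_sub_one, pow_succ, pow_succ, pow_add, pow_mul,
    FiniteField.pow_card_sub_one_eq_one a ha, one_pow, mul_one]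

noncomputable def reduceDegrees (f : MvPolynomial ι F) : MvPolynomial ι F :=
  ∑ m ∈ f.support,
    monomial (m.mapRange (reduceExp (Fintype.card F)) (reduceExp_zero _)) (coeff m f)

lemma eval_reduceDegrees (f : MvPolynomial ι F) (x : ι → F) :
    eval x (reduceDegrees f) = eval x f := by
  rw [reduceDegrees, map_sum, eval_eq x f]
  refine sum_congr rfl fun m _ => ?_
  rw [eval_monomial, Finsupp.prod_mapRange_index fun i => pow_zero (x i)]
  simp only [Finsupp.prod, pow_reduceExp]

lemma totalDegree_reduceDegrees_le (f : MvPolynomial ι F) :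
    (reduceDegrees f).totalDegree ≤ f.totalDegree := by
  refine (totalDegree_finsetSum _ _).trans (Finset.sup_le fun m hm => ?_)
  refine (totalDegree_monomial_le _ _).trans (le_trans ?_ (le_totalDegree hm))
  rw [Finsupp.sum_mapRange_index fun _ => rfl]
  exact Finsupp.sum_le_sum fun i _ => reduceExp_le _ _

lemma degreeOf_reduceDegrees_le [DecidableEq ι] (f : MvPolynomial ι F) (i : ι) :
    (reduceDegrees f).degreeOf i ≤ Fintype.card F - 1 := by
  rw [degreeOf_le_iff]
  intro m hm
  obtain ⟨m', -, hm'⟩ := mem_biUnion.mp (support_sum hm)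
  rw [mem_singleton.mp (support_monomial_subset hm'), Finsupp.mapRange_apply]
  exact reduceExp_le_sub_one Fintype.one_lt_card _

end ExponentReduction

section AlonFuredi

variable {F : Type*} [Field F] [Fintype F] [DecidableEq F]

lemma card_sub_natDegree_le_card_eval_ne_zero {g : Polynomial F} (hg : g ≠ 0) :
    Fintype.card F - g.natDegree ≤ #{t | g.eval t ≠ 0} := by
  have hroots : #{t | g.eval t = 0} ≤ g.natDegree :=
    Polynomial.card_le_degree_of_subset_roots fun t ht => by
      simpa [Polynomial.mem_roots hg] using ht
  have := card_filter_add_card_filter_not (s := univ) (fun t => g.eval t = 0)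
  rw [card_univ] at this
  simp only [ne_eq]
  omega

lemma rpow_one_sub_div_le {q d : ℝ} (hd : 0 ≤ d) (hdq : d ≤ q - 1) :
    q ^ (1 - d / (q - 1)) ≤ q - d := by
  have hq : 0 ≤ q - 1 := hd.trans hdq
  have hdiv : d / (q - 1) * (q - 1) = d := div_mul_cancel_of_imp fun h => by linarith
  have hdiv1 : d / (q - 1) ≤ 1 := div_le_one_of_le₀ hdq hq
  have := rpow_one_add_le_one_add_mul_self (s := q - 1) (by linarith)
    (p := 1 - d / (q - 1)) (by linarith) (by linarith [div_nonneg hd hq])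
  rw [add_sub_cancel] at this
  linarith

/-- Each point `y` at which the leading coefficient in `X 0` survives carries a fibre of at
least `q - d` nonzeros of `f`. -/
lemma card_mul_le_card_eval_ne_zero {n : ℕ} (f : MvPolynomial (Fin (n + 1)) F) :
    #{y | eval y (finSuccEquiv F n f).leadingCoeff ≠ 0} *
        (Fintype.card F - (finSuccEquiv F n f).natDegree) ≤ #{x | eval x f ≠ 0} := by
  set g := finSuccEquiv F n f
  set T : Finset (Fin n → F) := {y | eval y g.leadingCoeff ≠ 0}
  calc #T * (Fintype.card F - g.natDegree) = ∑ _y ∈ T, (Fintype.card F - g.natDegree) := by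
        rw [sum_const, smul_eq_mul]
    _ ≤ ∑ y ∈ T, #{t | (g.map (eval y)).eval t ≠ 0} := by
        refine sum_le_sum fun y hy => ?_
        have hgy : g.map (eval y) ≠ 0 := fun h0 => (mem_filter.mp hy).2 <| by
          rw [Polynomial.leadingCoeff, ← Polynomial.coeff_map, h0, Polynomial.coeff_zero]
        exact (Nat.sub_le_sub_left Polynomial.natDegree_map_le _).trans
          (card_sub_natDegree_le_card_eval_ne_zero hgy)
    _ = #(T.sigma fun y => {t | (g.map (eval y)).eval t ≠ 0}) := (card_sigma _ _).symm
    _ ≤ #{x | eval x f ≠ 0} := by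
        refine card_le_card_of_injOn (fun p => Fin.cons p.2 p.1) (fun p hp => ?_) ?_
        · simp only [coe_sigma, Set.mem_sigma_iff, coe_filter, mem_univ, true_and,
            Set.mem_ofPred_eq] at hp ⊢
          rw [eval_eq_eval_mv_eval']
          exact hp.2
        · rintro ⟨y, t⟩ - ⟨y', t'⟩ - h
          obtain ⟨rfl, rfl⟩ := Fin.cons_inj.mp h
          rfl

theorem rpow_le_card_eval_ne_zero_of_degreeOf_le : ∀ {n : ℕ} (f : MvPolynomial (Fin n) F),
    f ≠ 0 → (∀ i, f.degreeOf i ≤ Fintype.card F - 1) →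
    (Fintype.card F : ℝ) ^ ((n : ℝ) - f.totalDegree / ((Fintype.card F : ℝ) - 1)) ≤
      #{x | eval x f ≠ 0}
  | 0, f, hf, _ => by
    have hq : (1 : ℝ) ≤ Fintype.card F := by exact_mod_cast Fintype.card_pos
    have hc : coeff 0 f ≠ 0 := fun h => hf (by rw [eq_C_of_isEmpty f, h, map_zero])
    have hx : (fun _ => 0) ∈ ({x | eval x f ≠ 0} : Finset (Fin 0 → F)) := by
      rw [mem_filter, eq_C_of_isEmpty f, eval_C]
      exact ⟨mem_univ _, hc⟩
    refine (Real.rpow_le_one_of_one_le_of_nonpos hq ?_).trans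
      (by exact_mod_cast card_pos.mpr ⟨_, hx⟩)
    have := div_nonneg (Nat.cast_nonneg f.totalDegree) (sub_nonneg.mpr hq)
    push_cast
    linarith
  | n + 1, f, hf, hdeg => by
    set q := Fintype.card F
    set g := finSuccEquiv F n f
    set d := g.natDegree
    have hg : g ≠ 0 := (EmbeddingLike.map_ne_zero_iff).mpr hf
    have hlead : g.leadingCoeff ≠ 0 := Polynomial.leadingCoeff_ne_zero.mpr hg
    have hdq : d ≤ q - 1 := (natDegree_finSuccEquiv f).trans_le (hdeg 0)
    have hlead_deg : g.leadingCoeff.totalDegree + d ≤ f.totalDegree :=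
      totalDegree_coeff_finSuccEquiv_add_le f d hlead
    have IH := rpow_le_card_eval_ne_zero_of_degreeOf_le g.leadingCoeff hlead fun j =>
      (degreeOf_coeff_finSuccEquiv f j d).trans (hdeg j.succ)
    have hq : (1 : ℝ) < q := by exact_mod_cast Fintype.one_lt_card
    have hdqR : (d : ℝ) ≤ q - 1 := by
      have : ((d + 1 : ℕ) : ℝ) ≤ q := by
        exact_mod_cast (Nat.le_sub_one_iff_lt Fintype.card_pos).mp hdq
      push_cast at this
      linarith
    calc (q : ℝ) ^ (((n + 1 : ℕ) : ℝ) - f.totalDegree / ((q : ℝ) - 1))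
        ≤ (q : ℝ) ^ ((1 - d / ((q : ℝ) - 1)) +
            ((n : ℝ) - g.leadingCoeff.totalDegree / ((q : ℝ) - 1))) := by
          refine Real.rpow_le_rpow_of_exponent_le hq.le ?_
          have : ((g.leadingCoeff.totalDegree + d : ℕ) : ℝ) ≤ f.totalDegree := by
            exact_mod_cast hlead_deg
          have := div_le_div_of_nonneg_right this (by linarith : (0 : ℝ) ≤ q - 1)
          rw [Nat.cast_add, add_div] at this
          push_cast
          linarith
      _ = (q : ℝ) ^ (1 - d / ((q : ℝ) - 1)) *
            (q : ℝ) ^ ((n : ℝ) - g.leadingCoeff.totalDegree / ((q : ℝ) - 1)) :=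
          Real.rpow_add (by linarith) _ _
      _ ≤ ((q - d : ℕ) : ℝ) * #{y | eval y g.leadingCoeff ≠ 0} := by
          rw [Nat.cast_sub (by omega)]
          exact mul_le_mul (rpow_one_sub_div_le (Nat.cast_nonneg d) hdqR) IH (by positivity)
            (by linarith)
      _ ≤ #{x | eval x f ≠ 0} := by
          rw [mul_comm]
          exact_mod_cast card_mul_le_card_eval_ne_zero f

theorem rpow_le_card_eval_ne_zero {ι : Type*} [Fintype ι] [DecidableEq ι]
    (f : MvPolynomial ι F) (hf : ∃ x, eval x f ≠ 0) :
    (Fintype.card F : ℝ) ^ ((Fintype.card ι : ℝ) - f.totalDegree / ((Fintype.card F : ℝ) - 1)) ≤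
      #{x | eval x f ≠ 0} := by
  set e := Fintype.equivFin ι
  set g := reduceDegrees (rename e f)
  have hg : ∀ x, eval x g = eval (x ∘ e) f := fun x => by
    rw [eval_reduceDegrees, eval_rename]
  have hg0 : g ≠ 0 := by
    obtain ⟨x, hx⟩ := hf
    refine fun h => hx ?_
    simpa [h, Function.comp_assoc] using (hg (x ∘ e.symm)).symm
  have hq : (1 : ℝ) < Fintype.card F := by exact_mod_cast Fintype.one_lt_card
  have hdeg : (g.totalDegree : ℝ) ≤ f.totalDegree := by
    exact_mod_cast (totalDegree_reduceDegrees_le _).trans (totalDegree_rename_le _ _)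
  calc _ ≤ (Fintype.card F : ℝ) ^
          ((Fintype.card ι : ℝ) - g.totalDegree / ((Fintype.card F : ℝ) - 1)) :=
        Real.rpow_le_rpow_of_exponent_le hq.le (by gcongr)
    _ ≤ #{x | eval x g ≠ 0} :=
        rpow_le_card_eval_ne_zero_of_degreeOf_le g hg0 (degreeOf_reduceDegrees_le _)
    _ = #{x | eval x f ≠ 0} := by
        refine congrArg _ (card_nbij' (· ∘ e) (· ∘ e.symm) ?_ ?_ ?_ ?_) <;>
          intro x <;> simp [hg, Function.comp_assoc]

end AlonFuredi

section SeparatingPolynomials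

variable {F : Type*} [Field F] {ι : Type*}

lemma totalDegree_toMvPolynomial_le {R : Type*} [CommSemiring R] [Nontrivial R]
    (p : Polynomial R) (i : ι) :
    (p.toMvPolynomial i).totalDegree ≤ p.natDegree := by
  rw [Polynomial.toMvPolynomial, Polynomial.aeval_eq_sum_range]
  refine (totalDegree_finsetSum _ _).trans (Finset.sup_le fun n hn => ?_)
  refine (totalDegree_smul_le _ _).trans ?_
  rw [totalDegree_X_pow]
  exact Nat.lt_succ_iff.mp (mem_range.mp hn)

lemma exists_affine_of_card_eq_three [Fintype F] (h3 : Fintype.card F = 3) (π : Perm F) :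
    ∃ c d : F, ∀ x, π x = c * x + d := by
  classical
  have h30 : (3 : F) = 0 := by exact_mod_cast h3 ▸ FiniteField.cast_card_eq_zero F
  have h01 : (0 : F) ∉ ({1, -1} : Finset F) := by
    simp only [mem_insert, mem_singleton, not_or]
    exact ⟨zero_ne_one, fun h => one_ne_zero (by linear_combination h)⟩
  have h1 : (1 : F) ∉ ({-1} : Finset F) := by
    rw [mem_singleton]
    exact fun h => one_ne_zero (by linear_combination -h + h30)
  have huniv : (univ : Finset F) = {0, 1, -1} := by
    refine (eq_univ_of_card _ ?_).symm
    rw [card_insert_of_notMem h01, card_insert_of_notMem h1, card_singleton, h3]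
  -- in characteristic 3 this says that the three points `(x, π x)` are collinear
  have hsum : π 0 + π 1 + π (-1) = 0 + 1 + -1 := by
    have := Equiv.sum_comp π id
    rw [huniv, sum_insert h01, sum_insert h1, sum_singleton, sum_insert h01, sum_insert h1,
      sum_singleton] at this
    simp only [id] at this
    linear_combination this
  refine ⟨π 1 - π 0, π 0, fun x => ?_⟩
  have hx : x ∈ (univ : Finset F) := mem_univ x
  rw [huniv] at hx
  simp only [mem_insert, mem_singleton] at hx
  rcases hx with rfl | rfl | rfl
  · ring
  · ring
  · linear_combination hsum - π 0 * h30

lemma totalDegree_X_sub_toMvPolynomial_le (p : Polynomial F) (i j : ι) :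
    (X j - p.toMvPolynomial i).totalDegree ≤ max 1 p.natDegree :=
  (totalDegree_sub _ _).trans <| by
    rw [totalDegree_X]
    exact max_le_max le_rfl (totalDegree_toMvPolynomial_le p i)

lemma natDegree_interpolate_id_le [DecidableEq F] (s : Finset F) (r : F → F) :
    (Lagrange.interpolate s id r).natDegree ≤ #s - 1 :=
  Polynomial.natDegree_le_iff_degree_le.mpr (Lagrange.degree_interpolate_le r (Set.injOn_id _))

lemma eval_interpolate_id [DecidableEq F] {s : Finset F} (r : F → F) {x : F} (hx : x ∈ s) :
    (Lagrange.interpolate s id r).eval x = r x :=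
  Lagrange.eval_interpolate_at_node r (Set.injOn_id _) hx

theorem exists_separating_poly_of_card_eq_three [Fintype F] (h3 : Fintype.card F = 3)
    (π : Perm F) (i j : ι) {κ : ι → F} (hκ : π (κ i) ≠ κ j) :
    ∃ q : MvPolynomial ι F, q.totalDegree ≤ 1 ∧ eval κ q ≠ 0 ∧
      ∀ x, π (x i) = x j → eval x q = 0 := by
  obtain ⟨c, d, hπ⟩ := exists_affine_of_card_eq_three h3 π
  refine ⟨X j - c • X i - C d, ?_, ?_, fun x hx => ?_⟩
  · refine (totalDegree_sub_C_le _ _).trans ((totalDegree_sub _ _).trans ?_)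
    rw [totalDegree_X, max_le_iff]
    exact ⟨le_rfl, (totalDegree_smul_le _ _).trans (totalDegree_X _).le⟩
  · rw [hπ] at hκ
    simpa [sub_sub, sub_eq_zero, smul_eq_mul] using hκ.symm
  · simp [← hx, hπ]

/-- The polynomial `(X j - h₁(X i)) * (X i - h₂(X j))`, where `h₁` interpolates `π` off the two
points `π⁻¹ (κ j)` and `c`, and `h₂` interpolates `π⁻¹` on their images. -/
theorem exists_separating_poly_of_four_le_card [Fintype F] [DecidableEq F]
    (h4 : 4 ≤ Fintype.card F) (π : Perm F) (i j : ι) {κ : ι → F} (hκ : π (κ i) ≠ κ j) :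
    ∃ q : MvPolynomial ι F, q.totalDegree ≤ Fintype.card F - 2 ∧ eval κ q ≠ 0 ∧
      ∀ x, π (x i) = x j → eval x q = 0 := by
  have hab : κ i ≠ π.symm (κ j) := fun h => hκ (by rw [h, Equiv.apply_symm_apply])
  obtain ⟨c, hc⟩ : ∃ c, c ∉ ({κ i, π.symm (κ j)} : Finset F) := by
    by_contra! h
    have := card_le_card (fun x _ => h x : univ ⊆ {κ i, π.symm (κ j)})
    have := card_le_two (a := κ i) (b := π.symm (κ j))
    rw [card_univ] at *
    omega
  simp only [mem_insert, mem_singleton, not_or] at hc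
  set S : Finset F := univ \ {π.symm (κ j), c}
  set h₁ := Lagrange.interpolate S id π
  set h₂ := Lagrange.interpolate {κ j, π c} id π.symm
  have hS : #S = Fintype.card F - 2 := by
    rw [card_sdiff_of_subset (subset_univ _), card_univ, card_pair (Ne.symm hc.2)]
  have hmemS : ∀ {y}, y ∈ S ↔ y ≠ π.symm (κ j) ∧ y ≠ c := by simp [S]
  refine ⟨(X j - h₁.toMvPolynomial i) * (X i - h₂.toMvPolynomial j), ?_, ?_, fun x hx => ?_⟩
  · have h₁deg : h₁.natDegree ≤ #S - 1 := natDegree_interpolate_id_le S π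
    have h₂deg : h₂.natDegree ≤ 1 := (natDegree_interpolate_id_le {κ j, π c} π.symm).trans
      (Nat.sub_le_sub_right card_le_two 1)
    refine (totalDegree_mul _ _).trans ?_
    have := totalDegree_X_sub_toMvPolynomial_le h₁ i j
    have := totalDegree_X_sub_toMvPolynomial_le h₂ j i
    omega
  · have hκS : κ i ∈ S := hmemS.mpr ⟨hab, Ne.symm hc.1⟩
    simp only [map_mul, map_sub, eval_X, eval_toMvPolynomial]
    rw [eval_interpolate_id _ hκS, eval_interpolate_id _ (by simp)]
    exact mul_ne_zero (sub_ne_zero.mpr (Ne.symm hκ)) (sub_ne_zero.mpr hab)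
  · simp only [map_mul, map_sub, eval_X, eval_toMvPolynomial]
    by_cases hxS : x i ∈ S
    · rw [eval_interpolate_id _ hxS, hx, sub_self, zero_mul]
    · have hxj : x j ∈ ({κ j, π c} : Finset F) := by
        rw [hmemS] at hxS
        rw [← hx]
        rcases not_and_or.mp hxS with h | h <;> simp [not_not.mp h]
      rw [eval_interpolate_id _ hxj, ← hx, Equiv.symm_apply_apply, sub_self, mul_zero]

theorem exists_separating_poly [Fintype F] [DecidableEq F] (h3 : 3 ≤ Fintype.card F)
    (π : Perm F) (i j : ι) {κ : ι → F} (hκ : π (κ i) ≠ κ j) :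
    ∃ q : MvPolynomial ι F, q.totalDegree ≤ Fintype.card F - 2 ∧ eval κ q ≠ 0 ∧
      ∀ x, π (x i) = x j → eval x q = 0 := by
  rcases h3.eq_or_lt with h3 | h4
  · obtain ⟨q, hq, hq'⟩ := exists_separating_poly_of_card_eq_three h3.symm π i j hκ
    exact ⟨q, by omega, hq'⟩
  · exact exists_separating_poly_of_four_le_card h4 π i j hκ

end SeparatingPolynomials

section Labelings

variable {V α β : Type*}

/-- An `S_A`-labeling, recorded on both orientations of every edge: reversing an edge inverts
its permutation. -/
def IsSymmLabeling (σ : V → V → Perm α) : Prop := ∀ u v, σ v u = (σ u v)⁻¹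

def SimpleGraph.IsDPColoring (G : SimpleGraph V) (σ : V → V → Perm α) (κ : V → α) : Prop :=
  ∀ u v, G.Adj u v → σ u v (κ u) ≠ κ v

def conjLabeling (σ : V → V → Perm α) (φ : V → α ≃ β) (u v : V) : Perm β :=
  (φ u).symm.trans ((σ u v).trans (φ v))

@[simp]
lemma conjLabeling_apply (σ : V → V → Perm α) (φ : V → α ≃ β) (u v : V) (x : β) :
    conjLabeling σ φ u v x = φ v (σ u v ((φ u).symm x)) := rfl

lemma IsSymmLabeling.apply_eq_iff {σ : V → V → Perm α} (hσ : IsSymmLabeling σ) {u v : V}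
    {x y : α} : σ v u x = y ↔ σ u v y = x := by
  rw [hσ, Perm.inv_eq_iff_eq, eq_comm]

lemma IsSymmLabeling.conj {σ : V → V → Perm α} (hσ : IsSymmLabeling σ) (φ : V → α ≃ β) :
    IsSymmLabeling (conjLabeling σ φ) := fun u v => by
  ext x
  rw [Perm.eq_inv_iff_eq]
  simp [hσ u v]

lemma conjLabeling_conjLabeling_symm (σ : V → V → Perm α) (φ : V → α ≃ β) :
    conjLabeling (conjLabeling σ φ) (fun v => (φ v).symm) = σ := by
  ext u v x
  simp

lemma isDPColoring_conjLabeling_iff (G : SimpleGraph V) (σ : V → V → Perm α) (φ : V → α ≃ β)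
    (κ : V → α) : G.IsDPColoring (conjLabeling σ φ) (fun v => φ v (κ v)) ↔ G.IsDPColoring σ κ :=
  forall₂_congr fun u v => imp_congr_right fun _ => by simp

lemma card_dpColorings_conjLabeling (G : SimpleGraph V) (σ : V → V → Perm α) (φ : V → α ≃ β) :
    Nat.card {κ // G.IsDPColoring (conjLabeling σ φ) κ} = Nat.card {κ // G.IsDPColoring σ κ} :=
  Nat.card_congr <| (Equiv.subtypeEquiv (Equiv.piCongrRight φ)
    fun κ => (isDPColoring_conjLabeling_iff G σ φ κ).symm).symm

lemma exists_dpColoring_of_equiv {G : SimpleGraph V} (e : α ≃ β)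
    (h : ∀ σ : V → V → Perm α, IsSymmLabeling σ → ∃ κ, G.IsDPColoring σ κ)
    {σ : V → V → Perm β} (hσ : IsSymmLabeling σ) : ∃ κ, G.IsDPColoring σ κ := by
  obtain ⟨κ, hκ⟩ := h _ (hσ.conj fun _ => e.symm)
  refine ⟨fun v => e (κ v), ?_⟩
  have := (isDPColoring_conjLabeling_iff G _ (fun _ => e.symm.symm) κ).mpr hκ
  rwa [conjLabeling_conjLabeling_symm] at this

end Labelings

section Switching

variable {V α : Type*}

lemma SimpleGraph.Connected.exists_adj_dist_lt {G : SimpleGraph V} (hG : G.Connected)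
    (r : V) {v : V} (hv : v ≠ r) : ∃ u, G.Adj u v ∧ G.dist r u < G.dist r v := by
  obtain ⟨p, hp⟩ := hG.exists_walk_length_eq_dist v r
  obtain ⟨u, hadj, p', rfl⟩ := p.exists_eq_cons_of_ne hv
  refine ⟨u, hadj.symm, ?_⟩
  rw [SimpleGraph.dist_comm (u := r), SimpleGraph.dist_comm (u := r), ← hp,
    SimpleGraph.Walk.length_cons]
  exact Nat.lt_succ_of_le (SimpleGraph.dist_le p')

noncomputable def chainLabel (d : V → ℕ) (p : V → V) (hp : ∀ v, 0 < d v → d (p v) < d v)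
    (σ : V → V → Perm α) (v : V) : Perm α :=
  if 0 < d v then σ (p v) v * chainLabel d p hp σ (p v) else 1
termination_by d v
decreasing_by exact hp v ‹_›

lemma chainLabel_of_pos {d : V → ℕ} {p : V → V} (hp : ∀ v, 0 < d v → d (p v) < d v)
    (σ : V → V → Perm α) {v : V} (hv : 0 < d v) :
    chainLabel d p hp σ v = σ (p v) v * chainLabel d p hp σ (p v) := by
  rw [chainLabel, if_pos hv]

/-- Switching by the chain labels of a breadth-first spanning tree makes the labeling trivial on
the tree's `|V| - 1` edges. -/
theorem exists_conjLabeling_eq_one [Fintype V] [DecidableEq V] {G : SimpleGraph V}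
    [DecidableRel G.Adj] (hG : G.Connected) {σ : V → V → Perm α} (hσ : IsSymmLabeling σ) :
    ∃ (φ : V → α ≃ α) (T : Finset (Sym2 V)), T ⊆ G.edgeFinset ∧ #T + 1 = Fintype.card V ∧
      ∀ u v, s(u, v) ∈ T → conjLabeling σ φ u v = 1 := by
  obtain ⟨r⟩ := hG.nonempty
  choose p hp using fun v : V => (em (v = r)).elim (fun h => ⟨v, fun h' => absurd h h'⟩)
    fun h => (hG.exists_adj_dist_lt r h).imp fun _ hu _ => hu
  have hd : ∀ v, 0 < G.dist r v ↔ v ≠ r := fun v =>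
    ⟨fun h hv => by simp [hv] at h, fun h => hG.pos_dist_of_ne (Ne.symm h)⟩
  have hdp : ∀ v, 0 < G.dist r v → G.dist r (p v) < G.dist r v :=
    fun v hv => (hp v ((hd v).mp hv)).2
  set τ := chainLabel (G.dist r) p hdp σ
  have htree : ∀ v, v ≠ r → conjLabeling σ (fun w => (τ w)⁻¹) (p v) v = 1 := fun v hv => by
    ext x
    simp only [conjLabeling_apply, τ, chainLabel_of_pos hdp σ ((hd v).mpr hv), Perm.inv_def,
      Equiv.symm_symm]
    exact Equiv.symm_apply_apply (σ (p v) v * _) x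
  refine ⟨fun w => (τ w)⁻¹, (univ.erase r).image fun v => s(p v, v), ?_, ?_, ?_⟩
  · intro e he
    obtain ⟨v, hv, rfl⟩ := mem_image.mp he
    exact G.mem_edgeFinset.mpr (hp v (ne_of_mem_erase hv)).1
  · rw [card_image_of_injOn, card_erase_of_mem (mem_univ r), card_univ]
    · exact Nat.sub_add_cancel (Fintype.card_pos_iff.mpr ⟨r⟩)
    intro v hv w hw hvw
    rcases Sym2.eq_iff.mp hvw with ⟨-, h⟩ | ⟨h₁, h₂⟩
    · exact h
    · have hv' := (hp v (ne_of_mem_erase hv)).2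
      have hw' := (hp w (ne_of_mem_erase hw)).2
      rw [h₁] at hv'
      rw [← h₂] at hw'
      omega
  · intro u v huv
    obtain ⟨w, hw, hw'⟩ := mem_image.mp huv
    rcases Sym2.eq_iff.mp hw' with ⟨rfl, rfl⟩ | ⟨rfl, rfl⟩
    · exact htree w (ne_of_mem_erase hw)
    · rw [hσ.conj, htree w (ne_of_mem_erase hw), inv_one]

end Switching

section CoveringPolynomial

variable {V F : Type*} [Fintype V] [DecidableEq V] [Field F] [Fintype F] [DecidableEq F]

/-- Edges on which the labeling is trivial get the factor `X v - X u`, the others a separating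
polynomial of degree `q - 2`. -/
theorem exists_covering_poly {G : SimpleGraph V} [DecidableRel G.Adj]
    (hk : 3 ≤ Fintype.card F) {σ : V → V → Perm F} (hσ : IsSymmLabeling σ)
    {T : Finset (Sym2 V)} (hT : T ⊆ G.edgeFinset) (hTσ : ∀ u v, s(u, v) ∈ T → σ u v = 1)
    {κ : V → F} (hκ : G.IsDPColoring σ κ) :
    ∃ P : MvPolynomial V F, eval κ P ≠ 0 ∧ (∀ x, eval x P ≠ 0 → G.IsDPColoring σ x) ∧
      P.totalDegree ≤ #T + (#G.edgeFinset - #T) * (Fintype.card F - 2) := by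
  have hedge : ∀ e ∈ G.edgeFinset, ∃ q : MvPolynomial V F,
      q.totalDegree ≤ (if e ∈ T then 1 else Fintype.card F - 2) ∧ eval κ q ≠ 0 ∧
      ∀ x u v, s(u, v) = e → σ u v (x u) = x v → eval x q = 0 := by
    intro e he
    induction e using Sym2.ind with | h u v => ?_
    have huv : σ u v (κ u) ≠ κ v := hκ u v (G.mem_edgeFinset.mp he)
    obtain ⟨q, hqdeg, hqκ, hq⟩ : ∃ q : MvPolynomial V F,
        q.totalDegree ≤ (if s(u, v) ∈ T then 1 else Fintype.card F - 2) ∧ eval κ q ≠ 0 ∧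
          ∀ x, σ u v (x u) = x v → eval x q = 0 := by
      split_ifs with huvT
      · rw [hTσ u v huvT, Perm.one_apply] at huv
        refine ⟨X v - X u, ?_, by simpa [sub_eq_zero] using huv.symm, fun x hx => ?_⟩
        · exact (totalDegree_sub _ _).trans (by simp)
        · rw [hTσ u v huvT, Perm.one_apply] at hx
          simp [hx]
      · exact exists_separating_poly hk (σ u v) u v huv
    refine ⟨q, hqdeg, hqκ, fun x a b hab hx => ?_⟩
    rcases Sym2.eq_iff.mp hab with ⟨rfl, rfl⟩ | ⟨rfl, rfl⟩
    · exact hq x hx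
    · exact hq x (hσ.apply_eq_iff.mp hx)
  choose q hqdeg hqκ hq using hedge
  refine ⟨∏ e ∈ G.edgeFinset.attach, q e e.2, ?_, fun x hx u v huv hσx => ?_, ?_⟩
  · rw [map_prod]
    exact prod_ne_zero_iff.mpr fun e _ => hqκ e e.2
  · rw [map_prod, prod_ne_zero_iff] at hx
    have he : s(u, v) ∈ G.edgeFinset := G.mem_edgeFinset.mpr huv
    exact hx ⟨_, he⟩ (mem_attach _ _) (hq _ he x u v rfl hσx)
  · calc _ ≤ ∑ e ∈ G.edgeFinset.attach, (q e e.2).totalDegree := totalDegree_finsetProd _ _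
      _ ≤ ∑ e ∈ G.edgeFinset.attach, (if e.1 ∈ T then 1 else Fintype.card F - 2) :=
          sum_le_sum fun e _ => hqdeg e e.2
      _ = ∑ e ∈ G.edgeFinset, (if e ∈ T then 1 else Fintype.card F - 2) :=
          sum_attach _ fun e => if e ∈ T then 1 else Fintype.card F - 2
      _ = #T + (#G.edgeFinset - #T) * (Fintype.card F - 2) := by
          rw [sum_ite, sum_const, sum_const, filter_mem_eq_inter, inter_eq_right.mpr hT,
            filter_notMem_eq_sdiff, card_sdiff_of_subset hT, smul_eq_mul, smul_eq_mul, mul_one]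

end CoveringPolynomial

lemma exists_fintype_field_card_eq {k : ℕ} (hk : IsPrimePow k) :
    ∃ (F : Type) (_ : Field F) (_ : Fintype F), Fintype.card F = k := by
  obtain ⟨p, e, hp, he, rfl⟩ := hk
  have : Fact p.Prime := ⟨Nat.prime_iff.mpr hp⟩
  let : Fintype (GaloisField p e) := Fintype.ofFinite _
  exact ⟨GaloisField p e, inferInstance, inferInstance, by
    rw [← Nat.card_eq_fintype_card, GaloisField.card p e he.ne']⟩

lemma exponent_le_of_totalDegree_le {n m k t D : ℕ} (hk : 2 < k) (htn : t + 1 = n)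
    (htm : t ≤ m) (hD : D ≤ t + (m - t) * (k - 2)) :
    ((2 * (n : ℝ) - m) * ((k : ℝ) - 2) - ((k : ℝ) - 3)) / ((k : ℝ) - 1) ≤
      n - D / ((k : ℝ) - 1) := by
  have hk1 : (0 : ℝ) < k - 1 := by
    have : (2 : ℝ) < k := by exact_mod_cast hk
    linarith
  have hDR : (D : ℝ) ≤ t + (m - t) * (k - 2) := by
    have := (Nat.cast_le (α := ℝ)).mpr hD
    rwa [Nat.cast_add, Nat.cast_mul, Nat.cast_sub htm, Nat.cast_sub hk.le, Nat.cast_two] at this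
  rw [le_sub_iff_add_le, ← add_div, div_le_iff₀ hk1]
  subst htn
  push_cast
  linarith

theorem stmt_8_general {V : Type} [Fintype V] [DecidableEq V] (G : SimpleGraph V)
    [DecidableRel G.Adj] (hG : G.Connected)
    (n m k : ℕ) (hn : Fintype.card V = n) (hm : G.edgeFinset.card = m)
    (hk : 2 < k) (hpp : IsPrimePow k)
    (A : Type) [Fintype A] (hA : Fintype.card A = k)
    (hχ : ∀ σ : V → V → Equiv.Perm A, (∀ u v, σ v u = (σ u v)⁻¹) →
      ∃ κ : V → A, ∀ u v, G.Adj u v → σ u v (κ u) ≠ κ v) :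
    ∀ σ : V → V → Equiv.Perm A, (∀ u v, σ v u = (σ u v)⁻¹) →
      (k : ℝ) ^ (((2 * (n : ℝ) - m) * ((k : ℝ) - 2) - ((k : ℝ) - 3)) / ((k : ℝ) - 1)) ≤
        (Nat.card {κ : V → A // ∀ u v, G.Adj u v → σ u v (κ u) ≠ κ v} : ℝ) := by
  intro σ (hσ : IsSymmLabeling σ)
  obtain ⟨F, _, _, hF⟩ := exists_fintype_field_card_eq hpp
  classical
  let e : A ≃ F := Fintype.equivOfCardEq (hA.trans hF.symm)
  obtain ⟨φ, T, hTG, hTn, hTone⟩ := exists_conjLabeling_eq_one hG (hσ.conj fun _ => e)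
  set σ' := conjLabeling (conjLabeling σ fun _ => e) φ
  have hσ' : IsSymmLabeling σ' := (hσ.conj _).conj _
  obtain ⟨κ, hκ⟩ := exists_dpColoring_of_equiv e hχ hσ'
  obtain ⟨P, hPκ, hPcol, hPdeg⟩ := exists_covering_poly (by omega) hσ' hTG hTone hκ
  rw [hm, hF] at hPdeg
  have hcount : #{x | eval x P ≠ 0} ≤ Nat.card {κ // G.IsDPColoring σ κ} := by
    rw [← card_dpColorings_conjLabeling G σ fun _ => e, ← card_dpColorings_conjLabeling _ _ φ,
      Nat.card_eq_fintype_card, Fintype.card_subtype]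
    exact card_le_card (monotone_filter_right _ fun x _ => hPcol x)
  have hAF := rpow_le_card_eval_ne_zero P ⟨κ, hPκ⟩
  rw [hF, hn] at hAF
  calc _ ≤ (k : ℝ) ^ ((n : ℝ) - P.totalDegree / ((k : ℝ) - 1)) :=
        Real.rpow_le_rpow_of_exponent_le (by exact_mod_cast (by omega : 1 ≤ k))
          (exponent_le_of_totalDegree_le hk (hTn.trans hn) (hm ▸ card_le_card hTG) hPdeg)
    _ ≤ #{x | eval x P ≠ 0} := hAF
    _ ≤ Nat.card {κ // G.IsDPColoring σ κ} := by exact_mod_cast hcount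

/-- For a prime power `k > 2` and a connected simple graph `G` with
`χ_DP(G) ≤ k` and `m ≤ 2n - (k-3)/(k-2)`, every `S_A`-labeling of `G` (encoded by a
symmetric assignment of permutations of the `k`-set `A` to oriented edges) has at least
`k^(((2n-m)(k-2) - (k-3))/(k-1))` proper colorings, i.e. `P_DP(G,k)` is at least
this quantity. -/
theorem stmt_8 {V : Type} [Fintype V] [DecidableEq V] (G : SimpleGraph V)
    [DecidableRel G.Adj] (hG : G.Connected)
    (n m k : ℕ) (hn : Fintype.card V = n) (hm : G.edgeFinset.card = m)
    (hk : 2 < k) (hpp : IsPrimePow k)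
    (A : Type) [Fintype A] (hA : Fintype.card A = k)
    (hχ : ∀ σ : V → V → Equiv.Perm A, (∀ u v, σ v u = (σ u v)⁻¹) →
      ∃ κ : V → A, ∀ u v, G.Adj u v → σ u v (κ u) ≠ κ v)
    (hmn : (m : ℝ) ≤ 2 * n - ((k : ℝ) - 3) / ((k : ℝ) - 2)) :
    ∀ σ : V → V → Equiv.Perm A, (∀ u v, σ v u = (σ u v)⁻¹) →
      (k : ℝ) ^ (((2 * (n : ℝ) - m) * ((k : ℝ) - 2) - ((k : ℝ) - 3)) / ((k : ℝ) - 1)) ≤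
        (Nat.card {κ : V → A // ∀ u v, G.Adj u v → σ u v (κ u) ≠ κ v} : ℝ) :=
  stmt_8_general G hG n m k hn hm hk hpp A hA hχ
end

section
/- Let k be a prime power, S a nonempty set of F_k-linear permutations of F_k, and G an n-vertex graph with m edges that is S-k-colorable. If m ≤ (k−1)n, then P_S(G, k) ≥ k^{n − m/(k−1)}. -/
/-!
Orient every edge `uv` and write `σ u v x = a x + b`. A coloring `κ` is proper exactly when it is
not a zero of `P = ∏ (X v - a X u - b)`, a polynomial of total degree at most `m` which is not
identically zero on `F^V` because `G` is `S`-`k`-colorable. Folding exponents with `x ^ k = x`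
keeps `P` as a function and does not raise its degree, but makes it of degree `≤ k - 1` in each
variable. For such a polynomial in `n` variables, the number `N` of nonzeros satisfies
`k ^ (n (k - 1)) ≤ N ^ (k - 1) * k ^ deg`: by induction on `n`, every nonzero of the leading
coefficient in `X 0` (of degree `t`) extends to at least `k - t` nonzeros, and
`k ^ (k - 1 - t) ≤ (k - t) ^ (k - 1)` by Bernoulli's inequality. Taking `(k - 1)`-th roots gives
`N ≥ k ^ (n - m / (k - 1))`.
-/

theorem pow_pred_le_pow_pred {k y : ℕ} (hy : 1 ≤ y) (hyk : y ≤ k) :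
    k ^ (y - 1) ≤ y ^ (k - 1) := by
  rcases Nat.lt_or_ge k 2 with hk | hk
  · obtain rfl : y = 1 := by omega
    simp
  have hk1 : (0 : ℝ) < (k : ℝ) - 1 := by
    have : (2 : ℝ) ≤ k := by exact_mod_cast hk
    linarith
  set w : ℝ := ((y : ℝ) - 1) / ((k : ℝ) - 1)
  have hy1 : (1 : ℝ) ≤ y := by exact_mod_cast hy
  have hw : 0 ≤ w := div_nonneg (by linarith) hk1.le
  have hbern : (k : ℝ) ^ w ≤ y := by
    have hw1 : w ≤ 1 :=
      (div_le_one hk1).2 (by simp only [sub_le_sub_iff_right]; exact_mod_cast hyk)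
    have := rpow_one_add_le_one_add_mul_self (s := (k : ℝ) - 1) (by linarith) hw hw1
    rwa [add_sub_cancel, div_mul_cancel₀ _ hk1.ne', add_sub_cancel] at this
  have hpow : ((k : ℝ) ^ w) ^ (k - 1) = (k : ℝ) ^ (y - 1) := by
    rw [← Real.rpow_natCast, ← Real.rpow_mul (by positivity), Nat.cast_sub (by omega),
      Nat.cast_one, div_mul_cancel₀ _ hk1.ne', ← Nat.cast_one, ← Nat.cast_sub hy,
      Real.rpow_natCast]
  exact_mod_cast hpow ▸ pow_le_pow_left₀ (by positivity) hbern (k - 1)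

theorem rpow_sub_div_le_of_pow_le {k N n d : ℕ} (hk : 2 ≤ k)
    (h : k ^ (n * (k - 1)) ≤ N ^ (k - 1) * k ^ d) :
    (k : ℝ) ^ ((n : ℝ) - d / ((k : ℝ) - 1)) ≤ N := by
  have hk0 : (0 : ℝ) < k := by positivity
  have hk1 : ((k - 1 : ℕ) : ℝ) = (k : ℝ) - 1 := by rw [Nat.cast_sub (by omega), Nat.cast_one]
  have hk1pos : (0 : ℝ) < (k : ℝ) - 1 := by rw [← hk1]; exact_mod_cast (by omega : 0 < k - 1)
  refine (pow_le_pow_iff_left₀ (by positivity) (Nat.cast_nonneg N) (by omega : k - 1 ≠ 0)).1 ?_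
  calc ((k : ℝ) ^ ((n : ℝ) - d / ((k : ℝ) - 1))) ^ (k - 1)
      = (k : ℝ) ^ (n * (k - 1)) / (k : ℝ) ^ d := by
        rw [← Real.rpow_natCast, ← Real.rpow_mul hk0.le, hk1, sub_mul,
          div_mul_cancel₀ _ hk1pos.ne', Real.rpow_sub hk0, ← hk1, ← Nat.cast_mul,
          Real.rpow_natCast, Real.rpow_natCast]
    _ ≤ (N : ℝ) ^ (k - 1) := by
        rw [div_le_iff₀ (by positivity)]
        exact_mod_cast h

open Finset

theorem Polynomial.card_sub_natDegree_le_card_eval_ne_zero {F : Type*} [Field F] [Fintype F]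
    [DecidableEq F] {Q : Polynomial F} (hQ : Q ≠ 0) :
    Fintype.card F - Q.natDegree ≤ #{c | Q.eval c ≠ 0} := by
  have hroots : #{c | Q.eval c = 0} ≤ Q.natDegree :=
    calc #{c | Q.eval c = 0} ≤ #Q.roots.toFinset :=
          card_le_card fun c hc => by simpa [hQ] using hc
      _ ≤ Q.natDegree := (Multiset.toFinset_card_le _).trans (Polynomial.card_roots' Q)
  have := card_filter_add_card_filter_not (s := univ) (fun c => Q.eval c = 0)
  rw [card_univ] at this
  simp only [ne_eq]
  omega

def foldExponent (q a : ℕ) : ℕ := if a = 0 then 0 else (a - 1) % (q - 1) + 1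

theorem foldExponent_zero (q : ℕ) : foldExponent q 0 = 0 := rfl

theorem foldExponent_le (q a : ℕ) : foldExponent q a ≤ a := by
  unfold foldExponent
  split_ifs
  · exact Nat.zero_le _
  · have := Nat.mod_le (a - 1) (q - 1)
    omega

theorem foldExponent_le_pred {q : ℕ} (hq : 2 ≤ q) (a : ℕ) : foldExponent q a ≤ q - 1 := by
  unfold foldExponent
  split_ifs
  · exact Nat.zero_le _
  · have := Nat.mod_lt (a - 1) (by omega : 0 < q - 1)
    omega

theorem FiniteField.pow_foldExponent {F : Type*} [Field F] [Fintype F] (x : F) (a : ℕ) :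
    x ^ foldExponent (Fintype.card F) a = x ^ a := by
  unfold foldExponent
  split_ifs with ha
  · rw [ha]
  rcases eq_or_ne x 0 with rfl | hx
  · rw [zero_pow ha, zero_pow (Nat.succ_ne_zero _)]
  · calc x ^ ((a - 1) % (Fintype.card F - 1) + 1)
        = x ^ ((a - 1) % (Fintype.card F - 1) + 1) *
            (x ^ (Fintype.card F - 1)) ^ ((a - 1) / (Fintype.card F - 1)) := by
          rw [FiniteField.pow_card_sub_one_eq_one x hx, one_pow, mul_one]
      _ = x ^ a := by
          rw [← pow_mul, ← pow_add]
          have := Nat.mod_add_div (a - 1) (Fintype.card F - 1)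
          congr 1
          omega

namespace MvPolynomial

variable {F σ : Type*} [Field F] [Fintype F]

open Classical in
noncomputable def nonzeroPoints [Fintype σ] (P : MvPolynomial σ F) : Finset (σ → F) :=
  {x | eval x P ≠ 0}

@[simp]
theorem mem_nonzeroPoints [Fintype σ] {P : MvPolynomial σ F} {x : σ → F} :
    x ∈ nonzeroPoints P ↔ eval x P ≠ 0 := by
  simp [nonzeroPoints]

theorem card_nonzeroPoints_leadingCoeff_mul_le {n : ℕ} (P : MvPolynomial (Fin (n + 1)) F) :
    #(nonzeroPoints (finSuccEquiv F n P).leadingCoeff) *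
        (Fintype.card F - (finSuccEquiv F n P).natDegree) ≤ #(nonzeroPoints P) := by
  classical
  set φ := finSuccEquiv F n P
  have hfiber : ∀ y ∈ nonzeroPoints φ.leadingCoeff,
      Fintype.card F - φ.natDegree ≤ #{c | eval (Fin.cons c y : Fin (n + 1) → F) P ≠ 0} := by
    intro y hy
    have hlead : (φ.map (eval y)).coeff φ.natDegree ≠ 0 := by
      rwa [Polynomial.coeff_map, ← mem_nonzeroPoints]
    simp_rw [eval_eq_eval_mv_eval']
    refine le_trans ?_ (Polynomial.card_sub_natDegree_le_card_eval_ne_zero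
      fun h => hlead (by rw [h, Polynomial.coeff_zero]))
    exact Nat.sub_le_sub_left Polynomial.natDegree_map_le _
  calc #(nonzeroPoints φ.leadingCoeff) * (Fintype.card F - φ.natDegree)
      = ∑ y ∈ nonzeroPoints φ.leadingCoeff, (Fintype.card F - φ.natDegree) := by
        rw [sum_const, smul_eq_mul]
    _ ≤ ∑ y, #{c | eval (Fin.cons c y : Fin (n + 1) → F) P ≠ 0} :=
        (sum_le_sum hfiber).trans (sum_le_sum_of_subset (subset_univ _))
    _ = #{p : F × (Fin n → F) | eval (Fin.cons p.1 p.2 : Fin (n + 1) → F) P ≠ 0} := by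
        rw [card_filter, Fintype.sum_prod_type_right]
        simp only [card_filter]
    _ = #(nonzeroPoints P) :=
        card_equiv (Fin.consEquiv fun _ => F) fun p => by simp [Fin.consEquiv]

/-- A weak form of the Alon–Füredi bound, in the multiplicative shape that survives the
induction on the number of variables. -/
theorem pow_le_card_nonzeroPoints_pow_mul_pow {n : ℕ} {P : MvPolynomial (Fin n) F} (hP : P ≠ 0)
    (hdeg : ∀ i, P.degreeOf i ≤ Fintype.card F - 1) :
    Fintype.card F ^ (n * (Fintype.card F - 1)) ≤
      #(nonzeroPoints P) ^ (Fintype.card F - 1) * Fintype.card F ^ P.totalDegree := by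
  set q := Fintype.card F
  have hq : 1 ≤ q := Fintype.card_pos
  induction n with
  | zero =>
    obtain ⟨c, rfl⟩ := C_surjective (Fin 0) P
    have hc : c ≠ 0 := by rintro rfl; exact hP (map_zero C)
    have : nonzeroPoints (C c : MvPolynomial (Fin 0) F) = univ :=
      eq_univ_of_forall fun _ => by simpa using hc
    simp [this]
  | succ n ih =>
    set φ := finSuccEquiv F n P
    set t := φ.natDegree
    have hφ : φ ≠ 0 := (EmbeddingLike.map_ne_zero_iff).2 hP
    have ht : t ≤ q - 1 := (natDegree_finSuccEquiv P).trans_le (hdeg 0)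
    have hlead : φ.leadingCoeff ≠ 0 := Polynomial.leadingCoeff_ne_zero.2 hφ
    have hdeg_lead : φ.leadingCoeff.totalDegree + t ≤ P.totalDegree :=
      totalDegree_coeff_finSuccEquiv_add_le P t hlead
    have ih' := ih hlead fun j => (degreeOf_coeff_finSuccEquiv P j t).trans (hdeg j.succ)
    calc q ^ ((n + 1) * (q - 1))
        = q ^ ((q - t) - 1) * q ^ t * q ^ (n * (q - 1)) := by
          rw [← pow_add, ← pow_add]
          congr 1
          rw [add_mul, one_mul]
          omega
      _ ≤ (q - t) ^ (q - 1) * q ^ t *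
            (#(nonzeroPoints φ.leadingCoeff) ^ (q - 1) * q ^ φ.leadingCoeff.totalDegree) :=
          Nat.mul_le_mul (Nat.mul_le_mul_right _
            (pow_pred_le_pow_pred (by omega) (Nat.sub_le q t))) ih'
      _ = (#(nonzeroPoints φ.leadingCoeff) * (q - t)) ^ (q - 1) *
            q ^ (φ.leadingCoeff.totalDegree + t) := by
          ring
      _ ≤ #(nonzeroPoints P) ^ (q - 1) * q ^ P.totalDegree := by
          gcongr
          exact card_nonzeroPoints_leadingCoeff_mul_le P

theorem exists_eval_eq_degreeOf_le (P : MvPolynomial σ F) :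
    ∃ Q : MvPolynomial σ F, (∀ x, eval x Q = eval x P) ∧
      (∀ i, Q.degreeOf i ≤ Fintype.card F - 1) ∧ Q.totalDegree ≤ P.totalDegree := by
  classical
  set fold : (σ →₀ ℕ) → (σ →₀ ℕ) :=
    Finsupp.mapRange (foldExponent (Fintype.card F)) (foldExponent_zero _)
  refine ⟨∑ e ∈ P.support, monomial (fold e) (coeff e P), fun x => ?_, fun i => ?_, ?_⟩
  · conv_rhs => rw [P.as_sum]
    simp only [map_sum, eval_monomial, fold, Finsupp.prod_mapRange_index (fun _ => pow_zero _),
      FiniteField.pow_foldExponent]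
  · rw [degreeOf_le_iff]
    intro d hd
    obtain ⟨e, -, hde⟩ := mem_biUnion.1 (support_sum hd)
    rw [Finset.mem_singleton.1 (support_monomial_subset hde)]
    exact foldExponent_le_pred Fintype.one_lt_card _
  · refine (totalDegree_finsetSum _ _).trans (Finset.sup_le fun e he => ?_)
    refine (totalDegree_monomial_le _ _).trans (le_trans ?_ (le_totalDegree he))
    rw [Finsupp.sum_mapRange_index fun _ => rfl]
    exact sum_le_sum fun i _ => foldExponent_le _ _

theorem rpow_le_card_nonzeroPoints [Fintype σ] {P : MvPolynomial σ F}
    (hP : ∃ x, eval x P ≠ 0) {d : ℕ} (hd : P.totalDegree ≤ d) :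
    (Fintype.card F : ℝ) ^ ((Fintype.card σ : ℝ) - d / ((Fintype.card F : ℝ) - 1)) ≤
      #(nonzeroPoints P) := by
  set e := Fintype.equivFin σ
  obtain ⟨Q, hQ, hQdeg, hQtot⟩ := exists_eval_eq_degreeOf_le (rename e P)
  have hcard : #(nonzeroPoints Q) = #(nonzeroPoints P) :=
    card_equiv (e.arrowCongr (Equiv.refl F)).symm fun x => by
      simp [hQ, eval_rename, Equiv.arrowCongr]
  have hQne : Q ≠ 0 := by
    obtain ⟨x, hx⟩ := hP
    rintro rfl
    apply hx
    simpa [eval_rename, Function.comp_def] using (hQ (x ∘ e.symm)).symm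
  rw [← hcard]
  refine rpow_sub_div_le_of_pow_le Fintype.one_lt_card
    ((pow_le_card_nonzeroPoints_pow_mul_pow hQne hQdeg).trans ?_)
  gcongr
  · exact Fintype.card_pos
  · exact hQtot.trans ((totalDegree_rename_le _ _).trans hd)

end MvPolynomial

def Equiv.Perm.IsAffine {F : Type*} [Field F] (π : Equiv.Perm F) : Prop :=
  ∃ a b : F, a ≠ 0 ∧ ∀ x, π x = a * x + b

theorem Equiv.Perm.IsAffine.inv {F : Type*} [Field F] {π : Equiv.Perm F} (h : π.IsAffine) :
    π⁻¹.IsAffine := by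
  obtain ⟨a, b, ha, hπ⟩ := h
  refine ⟨a⁻¹, -(a⁻¹ * b), inv_ne_zero ha, fun x => π.injective ?_⟩
  rw [← Equiv.Perm.mul_apply, mul_inv_cancel, Equiv.Perm.one_apply, hπ]
  field_simp
  ring

namespace SimpleGraph

variable {V : Type*} (G : SimpleGraph V)

theorem forall_edgeSet_out_iff {R : V → V → Prop}
    (hR : ∀ u v, G.Adj u v → R u v → R v u) :
    (∀ e ∈ G.edgeSet, R e.out.1 e.out.2) ↔ ∀ u v, G.Adj u v → R u v := by
  constructor
  · intro h u v huv
    have hout : s(u, v) = s((s(u, v)).out.1, (s(u, v)).out.2) := (Quot.out_eq _).symm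
    rcases Sym2.eq_iff.1 hout with ⟨hu, hv⟩ | ⟨hv, hu⟩
    · simpa only [← hu, ← hv] using h _ (G.mem_edgeSet.2 huv)
    · exact hR _ _ huv.symm (by simpa only [← hu, ← hv] using h _ (G.mem_edgeSet.2 huv))
  · intro h e he
    refine h _ _ ?_
    rwa [← mem_edgeSet, Sym2.mk, Quot.out_eq]

variable {F : Type*} [Field F] [Fintype V] [DecidableRel G.Adj]

open MvPolynomial in
noncomputable def affineEdgeProduct (a b : V → V → F) : MvPolynomial V F :=
  ∏ e ∈ G.edgeFinset, (X e.out.2 - (C (a e.out.1 e.out.2) * X e.out.1 + C (b e.out.1 e.out.2)))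

open MvPolynomial in
theorem totalDegree_affineEdgeProduct_le (a b : V → V → F) :
    (G.affineEdgeProduct a b).totalDegree ≤ #G.edgeFinset := by
  refine (totalDegree_finsetProd _ _).trans ?_
  rw [Finset.card_eq_sum_ones]
  refine Finset.sum_le_sum fun e _ => ?_
  refine (totalDegree_sub _ _).trans (max_le (totalDegree_X _).le ?_)
  refine (totalDegree_add _ _).trans (max_le ((totalDegree_mul _ _).trans ?_) (by simp))
  simp

open MvPolynomial in
theorem eval_affineEdgeProduct_ne_zero_iff (a b : V → V → F) (κ : V → F) :
    eval κ (G.affineEdgeProduct a b) ≠ 0 ↔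
      ∀ e ∈ G.edgeSet, κ e.out.2 ≠ a e.out.1 e.out.2 * κ e.out.1 + b e.out.1 e.out.2 := by
  simp [affineEdgeProduct, Finset.prod_ne_zero_iff, sub_eq_zero]

open MvPolynomial in
theorem forall_adj_ne_iff_eval_affineEdgeProduct_ne_zero {σ : V → V → Equiv.Perm F}
    (hsym : ∀ u v, σ v u = (σ u v)⁻¹) {a b : V → V → F}
    (hab : ∀ u v, G.Adj u v → ∀ x, σ u v x = a u v * x + b u v) (κ : V → F) :
    (∀ u v, G.Adj u v → σ u v (κ u) ≠ κ v) ↔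
      eval κ (G.affineEdgeProduct a b) ≠ 0 := by
  have hR : ∀ u v, G.Adj u v → (σ u v (κ u) ≠ κ v ↔ κ v ≠ a u v * κ u + b u v) :=
    fun u v huv => by rw [hab u v huv, ne_comm]
  rw [G.eval_affineEdgeProduct_ne_zero_iff,
    G.forall_edgeSet_out_iff (R := fun u v => κ v ≠ a u v * κ u + b u v)]
  · exact forall₂_congr fun u v => forall_congr' (hR u v)
  · intro u v huv h
    rw [← hR v u huv.symm, hsym, Ne, Equiv.Perm.inv_eq_iff_eq, eq_comm]
    exact (hR u v huv).2 h

end SimpleGraph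

open MvPolynomial in
theorem stmt_9_general (k : ℕ) (F : Type) [Field F] [Fintype F]
    (hcard : Fintype.card F = k)
    (S : Set (Equiv.Perm F))
    (hSlin : ∀ π ∈ S, ∃ a b : F, a ≠ 0 ∧ ∀ x : F, π x = a * x + b)
    {V : Type} [Fintype V] [DecidableEq V] (G : SimpleGraph V) [DecidableRel G.Adj]
    (n m : ℕ) (hn : Fintype.card V = n) (hm : G.edgeFinset.card = m)
    (hcol : ∀ σ : V → V → Equiv.Perm F,
      (∀ u v, σ v u = (σ u v)⁻¹) →
      (∀ u v, G.Adj u v → σ u v ∈ S ∨ (σ u v)⁻¹ ∈ S) →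
      ∃ κ : V → F, ∀ u v, G.Adj u v → σ u v (κ u) ≠ κ v) :
    ∀ σ : V → V → Equiv.Perm F,
      (∀ u v, σ v u = (σ u v)⁻¹) →
      (∀ u v, G.Adj u v → σ u v ∈ S ∨ (σ u v)⁻¹ ∈ S) →
      (k : ℝ) ^ ((n : ℝ) - (m : ℝ) / ((k : ℝ) - 1)) ≤
        (Nat.card {κ : V → F // ∀ u v, G.Adj u v → σ u v (κ u) ≠ κ v} : ℝ) := by
  intro σ hsym hS
  subst hcard hn hm
  obtain ⟨κ₀, hκ₀⟩ := hcol σ hsym hS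
  have haff : ∀ u v, G.Adj u v → (σ u v).IsAffine := fun u v huv =>
    (hS u v huv).elim (hSlin _) fun h => inv_inv (σ u v) ▸ Equiv.Perm.IsAffine.inv (hSlin _ h)
  choose! a b _ hab using haff
  have hproper := G.forall_adj_ne_iff_eval_affineEdgeProduct_ne_zero hsym hab
  rw [Nat.card_congr ((Equiv.subtypeEquivRight hproper).trans
    (Equiv.subtypeEquivRight fun _ => mem_nonzeroPoints.symm)), Nat.card_eq_finsetCard]
  exact rpow_le_card_nonzeroPoints ⟨κ₀, (hproper κ₀).1 hκ₀⟩
    (G.totalDegree_affineEdgeProduct_le a b)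

/-- For a prime power `k`, a nonempty set `S` of `F_k`-linear permutations,
and an `S`-`k`-colorable graph `G` with `m ≤ (k-1)n`, every `S`-labeling of `G` has at
least `k^(n - m/(k-1))` proper colorings, i.e. `P_S(G,k) ≥ k^(n - m/(k-1))`. -/
theorem stmt_9 (k : ℕ) (hpp : IsPrimePow k) (F : Type) [Field F] [Fintype F]
    (hcard : Fintype.card F = k)
    (S : Set (Equiv.Perm F)) (hSne : S.Nonempty)
    (hSlin : ∀ π ∈ S, ∃ a b : F, a ≠ 0 ∧ ∀ x : F, π x = a * x + b)
    {V : Type} [Fintype V] [DecidableEq V] (G : SimpleGraph V) [DecidableRel G.Adj]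
    (n m : ℕ) (hn : Fintype.card V = n) (hm : G.edgeFinset.card = m)
    (hcol : ∀ σ : V → V → Equiv.Perm F,
      (∀ u v, σ v u = (σ u v)⁻¹) →
      (∀ u v, G.Adj u v → σ u v ∈ S ∨ (σ u v)⁻¹ ∈ S) →
      ∃ κ : V → F, ∀ u v, G.Adj u v → σ u v (κ u) ≠ κ v)
    (hmn : (m : ℝ) ≤ ((k : ℝ) - 1) * n) :
    ∀ σ : V → V → Equiv.Perm F,
      (∀ u v, σ v u = (σ u v)⁻¹) →
      (∀ u v, G.Adj u v → σ u v ∈ S ∨ (σ u v)⁻¹ ∈ S) →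
      (k : ℝ) ^ ((n : ℝ) - (m : ℝ) / ((k : ℝ) - 1)) ≤
        (Nat.card {κ : V → F // ∀ u v, G.Adj u v → σ u v (κ u) ≠ κ v} : ℝ) :=
  stmt_9_general k F hcard S hSlin G n m hn hm hcol
end
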